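/- arXiv:1201.0305 — 10 statements merged into one kernel-verified Lean document; each statement's English description precedes it below -/
import Mathlib

section
/- Let A, B, C, S be points with S in the interior of rays AB and AC, ABSC cyclic (concyclic), and let X be a point on ray AB with |AX| < |AB|. If Y is the second intersection of the circle through A, X, S with line AC, then |AY| > |AC|. -/
open EuclideanGeometry

lemma circle_inner_eq {E : Type*} [NormedAddCommGroup E] [InnerProductSpace ℝ E]
    (A P O : E) (h : dist A O = dist P O) :
    ‖P - A‖ ^ 2 = 2 * (inner ℝ (P - A) (O - A) : ℝ) := by
  have h2 : ‖A - O‖ ^ 2 = ‖P - O‖ ^ 2 := by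
    rw [← dist_eq_norm, ← dist_eq_norm, h]
  have e1 : P - O = (P - A) - (O - A) := by abel
  have e2 : ‖A - O‖ = ‖O - A‖ := norm_sub_rev _ _
  rw [e2, e1, norm_sub_sq_real (P - A) (O - A)] at h2
  linarith

/-- Let `A`, `B`, `C` be noncollinear and `S` a point in the interior of the
angle formed by the rays `AB` and `AC` (i.e. `S = A + t(B-A) + u(C-A)` with `t, u > 0`),
with `A`, `B`, `S`, `C` concyclic.  Let `X` lie on the ray `AB` strictly between `A` and `B`
(so `|AX| < |AB|`), and let `Y ≠ A` be the second intersection of the circle through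
`A`, `X`, `S` with the ray `AC`.  Then `|AY| > |AC|`. -/
theorem stmt_0 (A B C S X Y : EuclideanSpace ℝ (Fin 2))
    (hABC : ¬ Collinear ℝ ({A, B, C} : Set (EuclideanSpace ℝ (Fin 2))))
    -- `S` is in the interior of the region bounded by the rays `AB` and `AC`:
    (hS : ∃ t u : ℝ, 0 < t ∧ 0 < u ∧ S = t • (B - A) + u • (C - A) + A)
    -- `A, B, S, C` are concyclic:
    (hcyc : Cospherical ({A, B, S, C} : Set (EuclideanSpace ℝ (Fin 2))))
    -- `X` lies on the ray `AB` strictly between `A` and `B`: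
    (hX : ∃ r : ℝ, 0 < r ∧ r < 1 ∧ X = r • (B - A) + A)
    -- `Y` lies on the ray `AC`, `Y ≠ A`, and `A, X, S, Y` lie on one circle:
    (hY : ∃ v : ℝ, 0 < v ∧ Y = v • (C - A) + A) (hYA : Y ≠ A)
    (hcyc2 : Cospherical ({A, X, S, Y} : Set (EuclideanSpace ℝ (Fin 2)))) :
    dist A C < dist A Y := by
  obtain ⟨t, u, ht, hu, hSdef⟩ := hS
  obtain ⟨r, hr0, hr1, hXdef⟩ := hX
  obtain ⟨v, hv0, hYdef⟩ := hY
  obtain ⟨O, R, hO⟩ := hcyc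
  obtain ⟨Q, R2, hQ⟩ := hcyc2
  have hBA : B ≠ A := by
    intro h
    apply hABC
    apply Collinear.subset _ (collinear_pair ℝ A C)
    rw [h]
    intro x hx
    simp only [Set.mem_insert_iff, Set.mem_singleton_iff] at hx ⊢
    tauto
  have hCA : C ≠ A := by
    intro h
    apply hABC
    apply Collinear.subset _ (collinear_pair ℝ A B)
    rw [h]
    intro x hx
    simp only [Set.mem_insert_iff, Set.mem_singleton_iff] at hx ⊢
    tauto
  have hSA : S - A = t • (B - A) + u • (C - A) := by rw [hSdef, add_sub_cancel_right]
  have hXA : X - A = r • (B - A) := by rw [hXdef, add_sub_cancel_right]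
  have hYA' : Y - A = v • (C - A) := by rw [hYdef, add_sub_cancel_right]
  -- circle equations
  have hB1 := circle_inner_eq A B O (((hO A (by simp)).trans (hO B (by simp)).symm))
  have hS1 := circle_inner_eq A S O (((hO A (by simp)).trans (hO S (by simp)).symm))
  have hC1 := circle_inner_eq A C O (((hO A (by simp)).trans (hO C (by simp)).symm))
  have hX2 := circle_inner_eq A X Q (((hQ A (by simp)).trans (hQ X (by simp)).symm))
  have hS2 := circle_inner_eq A S Q (((hQ A (by simp)).trans (hQ S (by simp)).symm))
  have hY2 := circle_inner_eq A Y Q (((hQ A (by simp)).trans (hQ Y (by simp)).symm))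
  rw [← real_inner_self_eq_norm_sq] at hB1 hS1 hC1 hX2 hS2 hY2
  have hg : (inner ℝ (C - A) (B - A) : ℝ) = inner ℝ (B - A) (C - A) := real_inner_comm _ _
  simp only [hSA, hXA, hYA', inner_add_left, inner_add_right, real_inner_smul_left,
    real_inner_smul_right, hg] at hB1 hS1 hC1 hX2 hS2 hY2
  set e : ℝ := inner ℝ (B - A) (B - A) with he_def
  set f : ℝ := inner ℝ (C - A) (C - A) with hf_def
  set qe : ℝ := inner ℝ (B - A) (Q - A)
  set qf : ℝ := inner ℝ (C - A) (Q - A)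
  set pe : ℝ := inner ℝ (B - A) (O - A)
  set pf : ℝ := inner ℝ (C - A) (O - A)
  have he : (0:ℝ) < e := by
    rw [he_def, real_inner_self_eq_norm_sq]
    exact pow_pos (norm_pos_iff.2 (sub_ne_zero.2 hBA)) 2
  have hf : (0:ℝ) < f := by
    rw [hf_def, real_inner_self_eq_norm_sq]
    exact pow_pos (norm_pos_iff.2 (sub_ne_zero.2 hCA)) 2
  have hqe : r * e = 2 * qe := mul_left_cancel₀ hr0.ne' (by linear_combination hX2)
  have hqf : v * f = 2 * qf := mul_left_cancel₀ hv0.ne' (by linear_combination hY2)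
  have key : t * e + u * f = t * (r * e) + u * (v * f) := by
    linear_combination t * hB1 + u * hC1 - t * hqe - u * hqf + hS2 - hS1
  have hv1 : 1 < v := by
    nlinarith [mul_pos (mul_pos ht he) (sub_pos.2 hr1), mul_pos hu hf]
  have hd : 0 < dist A C := dist_pos.2 hCA.symm
  have hAY : dist A Y = v * dist A C := by
    rw [dist_comm A Y, dist_eq_norm, hYA', norm_smul, dist_comm A C, dist_eq_norm,
      Real.norm_eq_abs, abs_of_pos hv0]
  rw [hAY]
  exact (lt_mul_iff_one_lt_left hd).2 hv1
end

section
/- If a convex polygon with n ≥ 5 vertices (no three vertices collinear) admits a Simson point (a point whose orthogonal projections onto the lines containing all n sides are collinear), then a contradiction follows; i.e., no nondegenerate convex n-gon with n ≥ 5 admits a Simson point. -/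
open RealInnerProductSpace

/-!
Take the Simson line as the x-axis and write `P = (p, h)`.

If `h = 0`, every side is perpendicular to the axis or its foot is `P` itself. Two consecutive
sides through `P` make `P` a vertex; as two consecutive sides cannot both be perpendicular to the
axis, one of the next two sides also passes through `P`, which puts three vertices on a line.
Otherwise perpendicular sides and sides through `P` alternate, which gives three parallel sides,
impossible in a convex polygon.

If `h ≠ 0`, every side line is tangent to the parabola with focus `P` whose vertex tangent is the
axis; call `tᵢ` the slope of side `i`. The vertex shared by sides `j` and `j + 1` lies on the side
of line `i` given by the sign of `(tᵢ - tⱼ) (tᵢ - tⱼ₊₁)`. For the side of second largest slope this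
sign is negative at the vertex next to the side of largest slope, and positive at a vertex between
two sides of smaller slope, which exists once `n ≥ 5`; this contradicts convexity.
-/

lemma Collinear.exists_ne_zero_forall_eq_smul_vadd {k V P : Type*} [DivisionRing k]
    [AddCommGroup V] [Module k V] [AddTorsor V P] [Nontrivial V] {s : Set P}
    (h : Collinear k s) : ∃ (p₀ : P) (v : V), v ≠ 0 ∧ ∀ p ∈ s, ∃ r : k, p = r • v +ᵥ p₀ := by
  obtain ⟨p₀, v, hv⟩ := (collinear_iff_exists_forall_eq_smul_vadd s).1 h
  rcases eq_or_ne v 0 with rfl | hv0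
  · obtain ⟨u, hu⟩ := exists_ne (0 : V)
    exact ⟨p₀, u, hu, fun p hp => ⟨0, by simpa using hv p hp⟩⟩
  · exact ⟨p₀, v, hv0, hv⟩

lemma ZMod.ne_of_eq_add_natCast {n : ℕ} {x y : ZMod n} (k : ℕ) (h : y = x + k)
    (hk : 0 < k ∧ k < n := by omega) : x ≠ y := by
  rintro rfl
  have : ((k : ℕ) : ZMod n) = ((0 : ℕ) : ZMod n) := by simpa using h
  rw [ZMod.natCast_eq_natCast_iff', Nat.mod_eq_of_lt hk.2, Nat.zero_mod] at this
  omega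

namespace SimsonPolygon

open ZMod (ne_of_eq_add_natCast)

local notation "ℝ²" => EuclideanSpace ℝ (Fin 2)

lemma ext_coords {x y : ℝ²} (h0 : x 0 = y 0) (h1 : x 1 = y 1) : x = y := by
  ext i; fin_cases i <;> assumption

lemma coord_sub_ne_zero_of_ne {x y : ℝ²} (h : x ≠ y) : x 0 - y 0 ≠ 0 ∨ x 1 - y 1 ≠ 0 := by
  by_contra! hc
  exact h (ext_coords (by linarith [hc.1]) (by linarith [hc.2]))

lemma inner_eq_coords (x y : ℝ²) : ⟪x, y⟫ = x 0 * y 0 + x 1 * y 1 := by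
  simp [PiLp.inner_apply, Fin.sum_univ_two]; ring

def orient (x y z : ℝ²) : ℝ := (y 0 - x 0) * (z 1 - x 1) - (y 1 - x 1) * (z 0 - x 0)

lemma orient_eq_zero_of_mem_line {x y z : ℝ²} (h : z ∈ line[ℝ, x, y]) : orient x y z = 0 := by
  obtain ⟨r, rfl⟩ := mem_affineSpan_pair_iff_exists_lineMap_eq.1 h
  simp [orient, AffineMap.lineMap_apply]; ring

lemma mem_line_of_orient_eq_zero {x y z : ℝ²} (hxy : x ≠ y) (h : orient x y z = 0) :
    z ∈ line[ℝ, x, y] := by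
  rw [mem_affineSpan_pair_iff_exists_lineMap_eq]
  unfold orient at h
  rcases coord_sub_ne_zero_of_ne hxy.symm with hd | hd
  · refine ⟨(z 0 - x 0) / (y 0 - x 0), ext_coords ?_ ?_⟩ <;>
      simp [AffineMap.lineMap_apply] <;> field_simp
    · ring
    · linear_combination -h
  · refine ⟨(z 1 - x 1) / (y 1 - x 1), ext_coords ?_ ?_⟩ <;>
      simp [AffineMap.lineMap_apply] <;> field_simp
    · linear_combination h
    · ring

lemma collinear_of_orient_eq_zero {x y z : ℝ²} (h : orient x y z = 0) :
    Collinear ℝ {x, y, z} := by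
  rcases eq_or_ne x y with rfl | hxy
  · simpa using collinear_pair ℝ x z
  · have := collinear_insert_of_mem_affineSpan_pair (mem_line_of_orient_eq_zero hxy h)
    rwa [Set.insert_comm, Set.pair_comm] at this

lemma orient_mul_pos_of_sSameSide {x y u w : ℝ²} (hxy : x ≠ y)
    (h : line[ℝ, x, y].SSameSide u w) : 0 < orient x y u * orient x y w := by
  obtain ⟨⟨p₁, hp₁, p₂, hp₂, hray⟩, hu, hw⟩ := h
  have hu0 : orient x y u ≠ 0 := fun h0 => hu (mem_line_of_orient_eq_zero hxy h0)
  have hw0 : orient x y w ≠ 0 := fun h0 => hw (mem_line_of_orient_eq_zero hxy h0)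
  obtain ⟨r, hr0, hr⟩ := hray.exists_nonneg_left (vsub_ne_zero.2 fun h => hu (h ▸ hp₁))
  have hr_0 : r * (u 0 - p₁ 0) = w 0 - p₂ 0 := by simpa using congrArg (· 0) hr
  have hr_1 : r * (u 1 - p₁ 1) = w 1 - p₂ 1 := by simpa using congrArg (· 1) hr
  have hw_eq : orient x y w = r * orient x y u := by
    have h₁ := orient_eq_zero_of_mem_line hp₁
    have h₂ := orient_eq_zero_of_mem_line hp₂
    unfold orient at *
    linear_combination h₂ - r * h₁ + (y 1 - x 1) * hr_0 - (y 0 - x 0) * hr_1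
  refine lt_of_le_of_ne ?_ (mul_ne_zero hu0 hw0).symm
  rw [hw_eq, mul_left_comm]
  exact mul_nonneg hr0 (mul_self_nonneg _)

lemma orient_eq_zero_of_vertical {x y z : ℝ²} (hy : y 0 = x 0) (hz : z 0 = y 0) :
    orient x y z = 0 := by
  unfold orient; rw [hz, hy]; ring

lemma orient_eq_zero_of_common_point {u v w P : ℝ²} (hP : P ≠ v) (hu : orient u v P = 0)
    (hw : orient v w P = 0) : orient u v w = 0 := by
  unfold orient at *
  rcases coord_sub_ne_zero_of_ne hP with hd | hd
  · refine (mul_eq_zero.1 ?_).resolve_left hd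
    linear_combination (w 0 - v 0) * hu - (v 0 - u 0) * hw
  · refine (mul_eq_zero.1 ?_).resolve_left hd
    linear_combination (w 1 - v 1) * hu - (v 1 - u 1) * hw

section Frame

/-- Coordinates of `x` in the frame with origin `q` and first axis along `w`, scaled by `‖w‖`. -/
def frame (q w x : ℝ²) : ℝ² :=
  !₂[(x 0 - q 0) * w 0 + (x 1 - q 1) * w 1, (x 1 - q 1) * w 0 - (x 0 - q 0) * w 1]

variable (q w : ℝ²)

lemma orient_frame (x y z : ℝ²) :
    orient (frame q w x) (frame q w y) (frame q w z) = ⟪w, w⟫ * orient x y z := by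
  rw [inner_eq_coords]; simp [frame, orient]; ring

lemma inner_frame_sub_frame (x y z u : ℝ²) :
    ⟪frame q w x - frame q w y, frame q w z - frame q w u⟫ = ⟪w, w⟫ * ⟪x - y, z - u⟫ := by
  simp only [inner_eq_coords]; simp [frame]; ring

lemma frame_smul_vadd_one (r : ℝ) : frame q w (r • w +ᵥ q) 1 = 0 := by
  simp [frame]; ring

end Frame

section Parabola

/-- `x` lies on the tangent of slope `t` to the parabola with focus `P` and vertex on the
x-axis. -/
def OnTangent (P : ℝ²) (t : ℝ) (x : ℝ²) : Prop := x 1 = t * (x 0 - P 0) - P 1 * t ^ 2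

noncomputable def sideSlope (u v : ℝ²) : ℝ := (v 1 - u 1) / (v 0 - u 0)

variable {P u v x y z F : ℝ²} {t s r : ℝ}

lemma onTangent_of_foot (huv : v 0 ≠ u 0) (hF : F 1 = 0) (hside : orient u v F = 0)
    (hperp : ⟪P - F, v - u⟫ = 0) :
    OnTangent P (sideSlope u v) u ∧ OnTangent P (sideSlope u v) v := by
  have hdx : v 0 - u 0 ≠ 0 := sub_ne_zero.2 huv
  have hdy : v 1 - u 1 = sideSlope u v * (v 0 - u 0) := (div_mul_cancel₀ _ hdx).symm
  rw [inner_eq_coords] at hperp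
  simp only [orient, PiLp.sub_apply, hF] at hside hperp
  have hu : OnTangent P (sideSlope u v) u := by
    refine mul_left_cancel₀ hdx ?_
    linear_combination -hside + sideSlope u v * hperp - (P 1 * sideSlope u v + (F 0 - u 0)) * hdy
  refine ⟨hu, ?_⟩
  unfold OnTangent at *
  linear_combination hu + hdy

lemma OnTangent.orient_eq_zero (hx : OnTangent P t x) (hy : OnTangent P t y)
    (hz : OnTangent P t z) : orient x y z = 0 := by
  unfold OnTangent at *; unfold orient; rw [hx, hy, hz]; ring

lemma OnTangent.coords_of_onTangent (h₁ : OnTangent P t x) (h₂ : OnTangent P s x) (hts : t ≠ s) :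
    x 0 = P 0 + P 1 * (t + s) ∧ x 1 = P 1 * t * s := by
  unfold OnTangent at *
  have hx0 : x 0 = P 0 + P 1 * (t + s) :=
    mul_left_cancel₀ (sub_ne_zero.2 hts) (by linear_combination h₂ - h₁)
  exact ⟨hx0, by rw [h₁, hx0]; ring⟩

lemma orient_of_onTangent (hx : OnTangent P t x) (hy : OnTangent P t y) (hz : OnTangent P s z)
    (hz' : OnTangent P r z) (hsr : s ≠ r) :
    orient x y z = (y 0 - x 0) * P 1 * ((t - s) * (t - r)) := by
  obtain ⟨hz0, hz1⟩ := hz.coords_of_onTangent hz' hsr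
  unfold OnTangent at hx hy
  unfold orient; rw [hx, hy, hz0, hz1]; ring

end Parabola

lemma exists_sign_change {n : ℕ} [NeZero n] (hn : 5 ≤ n) {t : ZMod n → ℝ}
    (ht : Function.Injective t) :
    ∃ i j k : ZMod n, j ≠ i ∧ j + 1 ≠ i ∧ k ≠ i ∧ k + 1 ≠ i ∧
      (t i - t j) * (t i - t (j + 1)) < 0 ∧ 0 < (t i - t k) * (t i - t (k + 1)) := by
  obtain ⟨M, -, hM⟩ := Finset.univ.exists_max_image t Finset.univ_nonempty
  obtain ⟨s, hs, hs_max⟩ := (Finset.univ.erase M).exists_max_image t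
    ⟨M + 1, Finset.mem_erase.2 ⟨(ne_of_eq_add_natCast 1 (by ring)).symm, Finset.mem_univ _⟩⟩
  have hsM : s ≠ M := Finset.ne_of_mem_erase hs
  have hts : t s < t M := (hM s (Finset.mem_univ _)).lt_of_ne (ht.ne hsM)
  have below : ∀ x, x ≠ M → x ≠ s → t x < t s := fun x hxM hxs =>
    (hs_max x (Finset.mem_erase.2 ⟨hxM, Finset.mem_univ _⟩)).lt_of_ne (ht.ne hxs)
  refine ⟨s, ?_⟩
  obtain ⟨j, hj, hj', hneg⟩ : ∃ j, j ≠ s ∧ j + 1 ≠ s ∧ (t s - t j) * (t s - t (j + 1)) < 0 := by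
    by_cases hMs : M + 1 = s
    · subst hMs
      refine ⟨M - 1, ne_of_eq_add_natCast 2 (by ring), by simpa using hsM, ?_⟩
      have h₁ := below (M - 1) (ne_of_eq_add_natCast 1 (by ring))
        (ne_of_eq_add_natCast 2 (by ring))
      rw [sub_add_cancel]
      exact mul_neg_of_pos_of_neg (by linarith) (by linarith)
    · refine ⟨M, hsM.symm, hMs, mul_neg_of_neg_of_pos (by linarith) ?_⟩
      linarith [below (M + 1) (ne_of_eq_add_natCast 1 (by ring)).symm hMs]
  have pos_of_avoid : ∀ k, k ≠ M → k ≠ s → k + 1 ≠ M → k + 1 ≠ s →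
      0 < (t s - t k) * (t s - t (k + 1)) := fun k h₁ h₂ h₃ h₄ =>
    mul_pos (by linarith [below k h₁ h₂]) (by linarith [below _ h₃ h₄])
  obtain ⟨k, hkM, hk, hk₁M, hk'⟩ : ∃ k, k ≠ M ∧ k ≠ s ∧ k + 1 ≠ M ∧ k + 1 ≠ s := by
    by_cases hs_near : s = M + 1 ∨ s = M + 2
    · refine ⟨M + 3, (ne_of_eq_add_natCast 3 (by ring)).symm, ?_,
        (ne_of_eq_add_natCast 4 (by ring)).symm, ?_⟩ <;> rcases hs_near with rfl | rfl
      exacts [(ne_of_eq_add_natCast 2 (by ring)).symm, (ne_of_eq_add_natCast 1 (by ring)).symm,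
        (ne_of_eq_add_natCast 3 (by ring)).symm, (ne_of_eq_add_natCast 2 (by ring)).symm]
    · push Not at hs_near
      refine ⟨M + 1, (ne_of_eq_add_natCast 1 (by ring)).symm, hs_near.1.symm,
        (ne_of_eq_add_natCast 2 (by ring)).symm, ?_⟩
      rw [add_assoc, one_add_one_eq_two]
      exact hs_near.2.symm
  exact ⟨j, k, hj, hj', hk, hk', hneg, pos_of_avoid k hkM hk hk₁M hk'⟩

section Polygon

variable {n : ℕ}

def IsNondegenerate (W : ZMod n → ℝ²) : Prop :=
  ∀ a b c, a ≠ b → a ≠ c → b ≠ c → orient (W a) (W b) (W c) ≠ 0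

def IsConvex (W : ZMod n → ℝ²) : Prop :=
  ∀ i j k, j ≠ i → j ≠ i + 1 → k ≠ i → k ≠ i + 1 →
    0 < orient (W i) (W (i + 1)) (W j) * orient (W i) (W (i + 1)) (W k)

variable {W : ZMod n → ℝ²}

lemma IsNondegenerate.ne (h : IsNondegenerate W) {a b c : ZMod n} (hab : a ≠ b) (hac : a ≠ c)
    (hbc : b ≠ c) : W a ≠ W b := by
  intro he
  apply h a b c hab hac hbc
  rw [he]; unfold orient; ring

lemma IsNondegenerate.comp_frame (h : IsNondegenerate W) (q : ℝ²) {w : ℝ²} (hw : w ≠ 0) :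
    IsNondegenerate (frame q w ∘ W) := fun a b c hab hac hbc => by
  simp only [Function.comp_apply, orient_frame]
  exact mul_ne_zero (real_inner_self_pos.2 hw).ne' (h a b c hab hac hbc)

lemma IsConvex.comp_frame (h : IsConvex W) (q : ℝ²) {w : ℝ²} (hw : w ≠ 0) :
    IsConvex (frame q w ∘ W) := fun i j k hj hj' hk hk' => by
  simp only [Function.comp_apply, orient_frame]
  rw [mul_mul_mul_comm]
  exact mul_pos (mul_self_pos.2 (real_inner_self_pos.2 hw).ne') (h i j k hj hj' hk hk')

lemma IsConvex.mul_pos_of_vertical (hc : IsConvex W) {i j k : ZMod n}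
    (hi : W (i + 1) 0 = W i 0) (hj : j ≠ i) (hj' : j ≠ i + 1) (hk : k ≠ i) (hk' : k ≠ i + 1) :
    0 < (W j 0 - W i 0) * (W k 0 - W i 0) := by
  have h := hc i j k hj hj' hk hk'
  simp only [orient, hi, sub_self, zero_mul, zero_sub] at h
  exact pos_of_mul_pos_right (by linear_combination h) (sq_nonneg (W (i + 1) 1 - W i 1))

lemma IsConvex.false_of_three_vertical (hn : 5 ≤ n) (hc : IsConvex W) (j : ZMod n)
    (h₀ : W (j + 1) 0 = W j 0) (h₂ : W (j + 2 + 1) 0 = W (j + 2) 0)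
    (h₄ : W (j + 4 + 1) 0 = W (j + 4) 0) : False := by
  have hA := hc.mul_pos_of_vertical h₀ (j := j + 2) (k := j + 4)
    (ne_of_eq_add_natCast 2 (by ring)).symm (ne_of_eq_add_natCast 1 (by ring)).symm
    (ne_of_eq_add_natCast 4 (by ring)).symm (ne_of_eq_add_natCast 3 (by ring)).symm
  have hB := hc.mul_pos_of_vertical h₂ (j := j + 1) (k := j + 4)
    (ne_of_eq_add_natCast 1 (by ring)) (ne_of_eq_add_natCast 2 (by ring))
    (ne_of_eq_add_natCast 2 (by ring)).symm (ne_of_eq_add_natCast 1 (by ring)).symm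
  have hC := hc.mul_pos_of_vertical h₄ (j := j + 1) (k := j + 2)
    (ne_of_eq_add_natCast 3 (by ring)) (ne_of_eq_add_natCast 4 (by ring))
    (ne_of_eq_add_natCast 2 (by ring)) (ne_of_eq_add_natCast 3 (by ring))
  rw [h₀] at hB hC
  nlinarith [mul_pos (mul_pos hA hB) hC,
    sq_nonneg ((W j 0 - W (j + 2) 0) * (W (j + 2) 0 - W (j + 4) 0) * (W (j + 4) 0 - W j 0))]

lemma false_of_forall_vertical_or_orient_eq_zero (hn : 5 ≤ n) (hnd : IsNondegenerate W)
    (hc : IsConvex W) (P : ℝ²) (h : ∀ i, W (i + 1) 0 = W i 0 ∨ orient (W i) (W (i + 1)) P = 0) :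
    False := by
  have not_vert_vert : ∀ i, W (i + 1) 0 = W i 0 → W (i + 1 + 1) 0 ≠ W (i + 1) 0 :=
    fun i h₁ h₂ => hnd i (i + 1) (i + 1 + 1) (ne_of_eq_add_natCast 1 (by ring))
      (ne_of_eq_add_natCast 2 (by ring)) (ne_of_eq_add_natCast 1 (by ring))
      (orient_eq_zero_of_vertical h₁ h₂)
  by_cases hvertex :
      ∃ i, orient (W i) (W (i + 1)) P = 0 ∧ orient (W (i + 1)) (W (i + 1 + 1)) P = 0
  · obtain ⟨i, h₁, h₂⟩ := hvertex
    have hP : P = W (i + 1) := by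
      by_contra hP
      exact hnd i (i + 1) (i + 1 + 1) (ne_of_eq_add_natCast 1 (by ring))
        (ne_of_eq_add_natCast 2 (by ring)) (ne_of_eq_add_natCast 1 (by ring))
        (orient_eq_zero_of_common_point hP h₁ h₂)
    subst hP
    rcases h (i + 2) with hv | hthru
    · have hthru := (h (i + 2 + 1)).resolve_left (not_vert_vert _ hv)
      exact hnd _ _ _ (ne_of_eq_add_natCast 1 (by ring)) (ne_of_eq_add_natCast 2 (by ring)).symm
        (ne_of_eq_add_natCast 3 (by ring)).symm hthru
    · exact hnd _ _ _ (ne_of_eq_add_natCast 1 (by ring)) (ne_of_eq_add_natCast 1 (by ring)).symm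
        (ne_of_eq_add_natCast 2 (by ring)).symm hthru
  · push Not at hvertex
    have two_step : ∀ i, W (i + 1) 0 = W i 0 → W (i + 2 + 1) 0 = W (i + 2) 0 := fun i hv => by
      have hthru := (h (i + 1)).resolve_left (not_vert_vert i hv)
      have hv₂ := (h (i + 1 + 1)).resolve_right (hvertex (i + 1) hthru)
      rwa [add_assoc i 1 1, one_add_one_eq_two] at hv₂
    obtain ⟨j, hj⟩ : ∃ j, W (j + 1) 0 = W j 0 := by
      rcases h 0 with hv | hthru
      · exact ⟨0, hv⟩
      · exact ⟨0 + 1, (h (0 + 1)).resolve_right (hvertex 0 hthru)⟩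
    have hj₄ := two_step (j + 2) (two_step j hj)
    rw [add_assoc j 2 2, two_add_two_eq_four] at hj₄
    exact hc.false_of_three_vertical hn j hj (two_step j hj) hj₄

lemma false_of_forall_side_onTangent [NeZero n] (hn : 5 ≤ n) (hnd : IsNondegenerate W)
    (hc : IsConvex W) {P : ℝ²} (t : ZMod n → ℝ)
    (ht : ∀ i, OnTangent P (t i) (W i) ∧ OnTangent P (t i) (W (i + 1))) : False := by
  have ht_inj : Function.Injective t := by
    intro a b hab
    by_contra hne
    by_cases hb : b = a + 1
    · subst hb
      refine hnd a (a + 1) (a + 1 + 1) (ne_of_eq_add_natCast 1 (by ring))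
        (ne_of_eq_add_natCast 2 (by ring)) (ne_of_eq_add_natCast 1 (by ring)) ?_
      exact (ht a).1.orient_eq_zero (ht a).2 (by rw [hab]; exact (ht (a + 1)).2)
    · refine hnd a (a + 1) b (ne_of_eq_add_natCast 1 (by ring)) hne (Ne.symm hb) ?_
      exact (ht a).1.orient_eq_zero (ht a).2 (by rw [hab]; exact (ht b).1)
  have orient_vertex : ∀ i j, orient (W i) (W (i + 1)) (W (j + 1)) =
      (W (i + 1) 0 - W i 0) * P 1 * ((t i - t j) * (t i - t (j + 1))) := fun i j =>
    orient_of_onTangent (ht i).1 (ht i).2 (ht j).2 (ht (j + 1)).1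
      (ht_inj.ne (ne_of_eq_add_natCast 1 (by ring)))
  obtain ⟨i, j, k, hj, hj', hk, hk', hneg, hpos⟩ := exists_sign_change hn ht_inj
  have hconv := hc i (j + 1) (k + 1) hj' (fun h => hj (add_right_cancel h)) hk'
    (fun h => hk (add_right_cancel h))
  rw [orient_vertex, orient_vertex, mul_mul_mul_comm, ← sq] at hconv
  exact hconv.not_ge (mul_nonpos_of_nonneg_of_nonpos (sq_nonneg _)
    (mul_neg_of_neg_of_pos hneg hpos).le)

theorem false_of_feet_on_axis [NeZero n] (hn : 5 ≤ n) (hnd : IsNondegenerate W)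
    (hc : IsConvex W) (P : ℝ²) (F : ZMod n → ℝ²) (hF : ∀ i, F i 1 = 0)
    (hside : ∀ i, orient (W i) (W (i + 1)) (F i) = 0)
    (hperp : ∀ i, ⟪P - F i, W (i + 1) - W i⟫ = 0) : False := by
  by_cases hP : P 1 = 0
  · refine false_of_forall_vertical_or_orient_eq_zero hn hnd hc P fun i => ?_
    have h := hperp i
    simp only [inner_eq_coords, PiLp.sub_apply, hP, hF, sub_self, zero_mul, add_zero] at h
    rcases mul_eq_zero.1 h with h | h
    · have hFP : F i = P := ext_coords (by linarith) (by rw [hF, hP])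
      exact Or.inr (hFP ▸ hside i)
    · exact Or.inl (by linarith)
  · have hdx : ∀ i, W (i + 1) 0 ≠ W i 0 := fun i hx => by
      have h := hperp i
      simp only [inner_eq_coords, PiLp.sub_apply, hx, sub_self, mul_zero, zero_add, hF] at h
      have hy : W (i + 1) 1 = W i 1 := by
        linarith [(mul_eq_zero.1 h).resolve_left (by simpa using hP)]
      exact hnd.ne (c := i + 2) (ne_of_eq_add_natCast 1 (by ring)).symm
        (ne_of_eq_add_natCast 1 (by ring)) (ne_of_eq_add_natCast 2 (by ring)) (ext_coords hx hy)
    exact false_of_forall_side_onTangent hn hnd hc (fun i => sideSlope (W i) (W (i + 1)))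
      fun i => onTangent_of_foot (hdx i) (hF i) (hside i) (hperp i)

end Polygon

section NatIndexed

variable {n : ℕ} {V : ℕ → ℝ²}

lemma not_collinear_of_ne
    (hnd : ∀ i j k, i < j → j < k → k < n → ¬Collinear ℝ {V i, V j, V k}) {a b c : ℕ}
    (ha : a < n) (hb : b < n) (hc : c < n) (hab : a ≠ b) (hac : a ≠ c) (hbc : b ≠ c) :
    ¬Collinear ℝ {V a, V b, V c} := by
  rcases Nat.lt_or_gt_of_ne hab with h₁ | h₁ <;> rcases Nat.lt_or_gt_of_ne hac with h₂ | h₂ <;>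
    rcases Nat.lt_or_gt_of_ne hbc with h₃ | h₃
  · exact hnd a b c h₁ h₃ hc
  · rw [Set.pair_comm]; exact hnd a c b h₂ h₃ hb
  · omega
  · rw [Set.pair_comm, Set.insert_comm]; exact hnd c a b h₂ h₁ hb
  · rw [Set.insert_comm]; exact hnd b a c h₁ h₂ hc
  · omega
  · rw [Set.insert_comm, Set.pair_comm]; exact hnd b c a h₃ h₂ ha
  · rw [Set.insert_comm, Set.pair_comm, Set.insert_comm]; exact hnd c b a h₃ h₁ ha

variable [NeZero n]

lemma isNondegenerate_comp_val
    (hnd : ∀ i j k, i < j → j < k → k < n → ¬Collinear ℝ {V i, V j, V k}) :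
    IsNondegenerate fun k : ZMod n => V k.val := fun a b c hab hac hbc h =>
  not_collinear_of_ne hnd (ZMod.val_lt a) (ZMod.val_lt b) (ZMod.val_lt c)
    ((ZMod.val_injective n).ne hab) ((ZMod.val_injective n).ne hac)
    ((ZMod.val_injective n).ne hbc) (collinear_of_orient_eq_zero h)

lemma comp_val_add_one (hper : Function.Periodic V n) (k : ZMod n) :
    V (k + 1).val = V (k.val + 1) := by
  rw [show k + 1 = ((k.val + 1 : ℕ) : ZMod n) by simp, ZMod.val_natCast, hper.map_mod_nat]

lemma isConvex_comp_val (hn : 3 ≤ n) (hper : Function.Periodic V n)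
    (hnd : IsNondegenerate fun k : ZMod n => V k.val)
    (hconv : ∀ i j k : ℕ, V j ≠ V i → V j ≠ V (i + 1) → V k ≠ V i → V k ≠ V (i + 1) →
      line[ℝ, V i, V (i + 1)].SSameSide (V j) (V k)) :
    IsConvex fun k : ZMod n => V k.val := by
  intro i j k hj hj' hk hk'
  have hi : i ≠ i + 1 := ne_of_eq_add_natCast 1 (by ring)
  have off_side : ∀ {x : ZMod n}, x ≠ i → x ≠ i + 1 →
      V x.val ≠ V i.val ∧ V x.val ≠ V (i.val + 1) := fun hx hx' => by
    rw [← comp_val_add_one hper]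
    exact ⟨hnd.ne hx hx' hi, hnd.ne hx' hx hi.symm⟩
  have h := hconv i.val j.val k.val (off_side hj hj').1 (off_side hj hj').2
    (off_side hk hk').1 (off_side hk hk').2
  rw [← comp_val_add_one hper] at h
  exact orient_mul_pos_of_sSameSide
    (hnd.ne (c := i + 2) hi (ne_of_eq_add_natCast 2 (by ring)) (ne_of_eq_add_natCast 1 (by ring))) h

end NatIndexed

end SimsonPolygon

open SimsonPolygon

/-- No nondegenerate convex `n`-gon with `n ≥ 5` admits a Simson point.
The polygon is given by its vertices `V 0, ..., V (n-1)`, extended `n`-periodically;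
nondegeneracy means no three vertices are collinear; convexity means that all vertices
off a given side line lie strictly on the same side of it.  A Simson point is a point `P`
whose orthogonal projections (feet `F i`) onto the side lines `Vᵢ Vᵢ₊₁` are all collinear. -/
theorem stmt_1 (n : ℕ) (hn : 5 ≤ n) (V : ℕ → EuclideanSpace ℝ (Fin 2))
    (hper : ∀ i, V (i + n) = V i)
    -- nondegeneracy: no three vertices are collinear
    (hnd : ∀ i j k, i < j → j < k → k < n →
      ¬ Collinear ℝ ({V i, V j, V k} : Set (EuclideanSpace ℝ (Fin 2))))
    -- convexity: vertices not on the line of side `i` are strictly on the same side of it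
    (hconv : ∀ i j k : ℕ, V j ≠ V i → V j ≠ V (i + 1) → V k ≠ V i → V k ≠ V (i + 1) →
      (affineSpan ℝ ({V i, V (i + 1)} : Set (EuclideanSpace ℝ (Fin 2)))).SSameSide
        (V j) (V k)) :
    ¬ ∃ (P : EuclideanSpace ℝ (Fin 2)) (F : ℕ → EuclideanSpace ℝ (Fin 2)),
      (∀ i, F i ∈ affineSpan ℝ ({V i, V (i + 1)} : Set (EuclideanSpace ℝ (Fin 2))) ∧
        ⟪P - F i, V (i + 1) - V i⟫ = 0) ∧
      Collinear ℝ (Set.range F) := by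
  rintro ⟨P, F, hF, hcol⟩
  have : NeZero n := ⟨by omega⟩
  obtain ⟨q, w, hw, hline⟩ := hcol.exists_ne_zero_forall_eq_smul_vadd
  have hnd' := isNondegenerate_comp_val hnd
  have hconv' := isConvex_comp_val (by omega) hper hnd' hconv
  refine false_of_feet_on_axis hn (hnd'.comp_frame q hw) (hconv'.comp_frame q hw) (frame q w P)
    (fun k => frame q w (F k.val)) (fun k => ?_) (fun k => ?_) (fun k => ?_)
  · obtain ⟨r, hr⟩ := hline _ ⟨k.val, rfl⟩
    rw [hr, frame_smul_vadd_one]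
  · rw [Function.comp_apply, Function.comp_apply, orient_frame, comp_val_add_one hper,
      orient_eq_zero_of_mem_line (hF k.val).1, mul_zero]
  · rw [Function.comp_apply, Function.comp_apply, inner_frame_sub_frame, comp_val_add_one hper,
      (hF k.val).2, mul_zero]
end

section
/- If Π = V₁...Vₙ with n ≥ 5 is a convex nondegenerate Simson polygon (admits a point S whose projections onto all side lines are collinear), then no two side lines of Π are parallel. -/
open EuclideanGeometry RealInnerProductSpace Module Submodule Affine

/-!
If the sides `i` and `j` are parallel with direction `d`, their feet `F i ≠ F j` both lie on the
line through the Simson point `P` perpendicular to `d`, which is therefore the Simson line; so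
`P - F k ⊥ d` for every `k`. For a side not parallel to `d`, `P - F k` is then orthogonal to two
independent directions of the plane, hence `P = F k` lies on that side. Convexity rules out three
parallel sides (the middle one of three parallel lines separates the other two), so every side
other than `i` and `j` passes through `P`. Since `n ≥ 5` there are two consecutive such sides,
which forces `P` to be their common vertex, and a third one missing that vertex: three vertices
are collinear.
-/

section Affine

variable {k V P : Type*} [Field k] [AddCommGroup V] [Module k V] [AddTorsor V P]

theorem AffineSubspace.Parallel.eq_of_mem {L L' : AffineSubspace k P} (h : L ∥ L') {p : P}
    (hp : p ∈ L) (hp' : p ∈ L') : L = L' :=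
  (AffineSubspace.eq_iff_direction_eq_of_mem hp hp').2 h.direction_eq

theorem AffineSubspace.Parallel.ne_of_mem {L L' : AffineSubspace k P} (h : L ∥ L') (hne : L ≠ L')
    {p q : P} (hp : p ∈ L) (hq : q ∈ L') : p ≠ q := by
  rintro rfl
  exact hne (h.eq_of_mem hp hq)

theorem Collinear.subset_of_mem_of_mem {s : Set P} {M : AffineSubspace k P} (h : Collinear k s)
    {p q : P} (hp : p ∈ s) (hq : q ∈ s) (hpq : p ≠ q) (hpM : p ∈ M) (hqM : q ∈ M) :
    s ⊆ M := fun _ hx =>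
  affineSpan_le.2 (Set.pair_subset hpM hqM) (h.mem_affineSpan_of_mem_of_ne hp hq hx hpq)

theorem eq_of_mem_affineSpan_pair_of_not_collinear {a b c p : P}
    (habc : ¬Collinear k {a, b, c}) (hab : p ∈ line[k, a, b]) (hbc : p ∈ line[k, b, c]) :
    p = b := by
  by_contra hpb
  have ha : a ∈ line[k, p, b] := (collinear_insert_of_mem_affineSpan_pair hab)
    |>.mem_affineSpan_of_mem_of_ne (by simp) (by simp) (by simp) hpb
  have hc : c ∈ line[k, p, b] := (collinear_insert_of_mem_affineSpan_pair hbc)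
    |>.mem_affineSpan_of_mem_of_ne (by simp) (by simp) (by simp) hpb
  exact habc (collinear_triple_of_mem_affineSpan_pair ha (right_mem_affineSpan_pair k p b) hc)

theorem not_collinear_of_ne {n : ℕ} {V : ℕ → P}
    (hnd : ∀ i j l, i < j → j < l → l < n → ¬Collinear k {V i, V j, V l}) {a b c : ℕ}
    (hab : a ≠ b) (hac : a ≠ c) (hbc : b ≠ c) (ha : a < n) (hb : b < n) (hc : c < n) :
    ¬Collinear k {V a, V b, V c} := by
  wlog h₁ : a < b generalizing a b
  · rw [Set.insert_comm]
    refine this (a := b) (b := a) ?_ ?_ ?_ ?_ ?_ ?_ <;> omega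
  wlog h₂ : b < c generalizing a b c
  · rcases lt_or_gt_of_ne hac with h | h
    · rw [Set.pair_comm]
      refine this (a := a) (b := c) (c := b) ?_ ?_ ?_ ?_ ?_ ?_ ?_ ?_ <;> omega
    · rw [Set.pair_comm, Set.insert_comm]
      refine this (a := c) (b := a) (c := b) ?_ ?_ ?_ ?_ ?_ ?_ ?_ ?_ <;> omega
  exact hnd a b c h₁ h₂ hc

end Affine

theorem exists_ne_of_four_lt_card {α : Type*} [Fintype α] [DecidableEq α] (a b c d : α)
    (h : 4 < Fintype.card α) : ∃ x, x ≠ a ∧ x ≠ b ∧ x ≠ c ∧ x ≠ d := by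
  obtain ⟨x, -, hx⟩ := Finset.exists_mem_notMem_of_card_lt_card
    (s := {a, b, c, d}) (t := Finset.univ) (Finset.card_le_four.trans_lt h)
  simp only [Finset.mem_insert, Finset.mem_singleton, not_or] at hx
  exact ⟨x, hx⟩

theorem ZMod.add_natCast_ne_self {a n : ℕ} (ha : 0 < a) (h : a < n) (x : ZMod n) :
    x + a ≠ x := by
  rw [Ne, add_eq_left, ZMod.natCast_eq_zero_iff]
  exact Nat.not_dvd_of_pos_of_lt ha h

theorem ZMod.add_one_ne_self {n : ℕ} (hn : 2 ≤ n) (x : ZMod n) : x + 1 ≠ x := by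
  exact_mod_cast ZMod.add_natCast_ne_self one_pos hn x

theorem ZMod.add_one_add_one_ne_self {n : ℕ} (hn : 3 ≤ n) (x : ZMod n) : x + 1 + 1 ≠ x := by
  rw [add_assoc, one_add_one_eq_two]
  exact_mod_cast ZMod.add_natCast_ne_self two_pos hn x

section Plane

variable {E : Type*} [NormedAddCommGroup E] [InnerProductSpace ℝ E]

theorem AffineSubspace.WSameSide.mul_inner_sub_nonneg {s : AffineSubspace ℝ E} {x y p u : E}
    (h : s.WSameSide x y) (hp : p ∈ s) (hu : ∀ v ∈ s.direction, ⟪u, v⟫ = 0) :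
    0 ≤ ⟪u, x - p⟫ * ⟪u, y - p⟫ := by
  rcases (AffineSubspace.wSameSide_iff_exists_left hp).1 h with hx | ⟨q, hq, hray⟩
  · rw [show ⟪u, x - p⟫ = 0 from hu _ (AffineSubspace.vsub_mem_direction hx hp), zero_mul]
  have hyq : ⟪u, y - p⟫ = ⟪u, y - q⟫ := by
    rw [← sub_add_sub_cancel y q p, inner_add_right,
      show ⟪u, q - p⟫ = 0 from hu _ (AffineSubspace.vsub_mem_direction hq hp), add_zero]
  rcases eq_or_ne (x - p) 0 with h0 | h0
  · rw [h0, inner_zero_right, zero_mul]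
  obtain ⟨r, hr, hxy⟩ := hray.exists_nonneg_left h0
  rw [hyq, show y - q = r • (x - p) from hxy.symm, real_inner_smul_right]
  nlinarith [mul_nonneg hr (mul_self_nonneg ⟪u, x - p⟫)]

variable [Fact (finrank ℝ E = 2)]

theorem affineSpan_pair_parallel_of_inner_eq_zero {a b c d w : E} (hab : a ≠ b) (hcd : c ≠ d)
    (hw : w ≠ 0) (h₁ : ⟪w, b - a⟫ = 0) (h₂ : ⟪w, d - c⟫ = 0) :
    line[ℝ, a, b] ∥ line[ℝ, c, d] := by
  rw [AffineSubspace.affineSpan_pair_parallel_iff_vectorSpan_eq, vectorSpan_pair_rev,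
    vectorSpan_pair_rev]
  have hba : b - a ≠ 0 := sub_ne_zero.2 hab.symm
  exact eq_span_singleton_of_mem_of_finrank_eq_one (finrank_span_singleton hba)
    (mem_span_singleton_of_inner_eq_zero_of_inner_eq_zero hw hba h₂ h₁) (sub_ne_zero.2 hcd.symm)

theorem AffineSubspace.Parallel.inner_sub_ne_zero {L L' : AffineSubspace ℝ E} {d u p p' : E}
    (hpar : L ∥ L') (hne : L ≠ L') (hL : L.direction = ℝ ∙ d) (hd : d ≠ 0) (hu : u ≠ 0)
    (hud : ⟪u, d⟫ = 0) (hp : p ∈ L) (hp' : p' ∈ L') : ⟪u, p' - p⟫ ≠ 0 := fun h =>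
  have hdir : p' -ᵥ p ∈ L.direction :=
    hL ▸ mem_span_singleton_of_inner_eq_zero_of_inner_eq_zero hu hd h hud
  hne (hpar.eq_of_mem ((AffineSubspace.vsub_right_mem_direction_iff_mem hp p').1 hdir) hp')

theorem not_wSameSide_of_three_parallel {L₁ L₂ L₃ : AffineSubspace ℝ E} {d p₁ p₂ p₃ : E}
    (hL₁ : L₁.direction = ℝ ∙ d) (hd : d ≠ 0) (h₁₂ : L₁ ∥ L₂) (h₁₃ : L₁ ∥ L₃)
    (n₁₂ : L₁ ≠ L₂) (n₁₃ : L₁ ≠ L₃) (n₂₃ : L₂ ≠ L₃) (hp₁ : p₁ ∈ L₁) (hp₂ : p₂ ∈ L₂)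
    (hp₃ : p₃ ∈ L₃) (s₁ : L₁.WSameSide p₂ p₃) (s₂ : L₂.WSameSide p₁ p₃) :
    ¬L₃.WSameSide p₁ p₂ := by
  intro s₃
  obtain ⟨u, hu, hu0⟩ : ∃ u ∈ (ℝ ∙ d)ᗮ, u ≠ 0 := by
    refine exists_mem_ne_zero_of_ne_bot fun h => ?_
    have := finrank_orthogonal_span_singleton (𝕜 := ℝ) (n := 1) hd
    rw [h, finrank_bot] at this
    exact zero_ne_one this
  have hud : ⟪u, d⟫ = 0 := mem_orthogonal_singleton_iff_inner_left.1 hu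
  have hperp : ∀ L, L₁ ∥ L → ∀ v ∈ L.direction, ⟪u, v⟫ = 0 := by
    intro L hL v hv
    rw [← hL.direction_eq, hL₁] at hv
    obtain ⟨c, rfl⟩ := mem_span_singleton.1 hv
    rw [real_inner_smul_right, hud, mul_zero]
  have a₁₂ := h₁₂.inner_sub_ne_zero n₁₂ hL₁ hd hu0 hud hp₁ hp₂
  have a₁₃ := h₁₃.inner_sub_ne_zero n₁₃ hL₁ hd hu0 hud hp₁ hp₃
  have a₂₃ := (h₁₂.symm.trans h₁₃).inner_sub_ne_zero n₂₃ (h₁₂.direction_eq ▸ hL₁) hd hu0 hud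
    hp₂ hp₃
  have t₁ := s₁.mul_inner_sub_nonneg hp₁ (hperp L₁ (.refl _))
  have t₂ := s₂.mul_inner_sub_nonneg hp₂ (hperp L₂ h₁₂)
  have t₃ := s₃.mul_inner_sub_nonneg hp₃ (hperp L₃ h₁₃)
  simp only [inner_sub_right] at a₁₂ a₁₃ a₂₃ t₁ t₂ t₃
  -- with `aᵢ = ⟪u, pᵢ⟫`, the product of `t₁, t₂, t₃` is `-((a₂ - a₁) (a₃ - a₁) (a₃ - a₂))²`
  have hsq := mul_self_pos.2 (mul_ne_zero (mul_ne_zero a₁₂ a₁₃) a₂₃)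
  nlinarith [mul_nonneg (mul_nonneg t₁ t₂) t₃]

end Plane

section Polygon

variable {E : Type*} [NormedAddCommGroup E] [InnerProductSpace ℝ E] {n : ℕ} {W : ZMod n → E}

def sideLine (W : ZMod n → E) (x : ZMod n) : AffineSubspace ℝ E := line[ℝ, W x, W (x + 1)]

theorem direction_sideLine (x : ZMod n) :
    (sideLine W x).direction = ℝ ∙ (W (x + 1) - W x) := by
  rw [sideLine, direction_affineSpan, vectorSpan_pair_rev, vsub_eq_sub]

theorem left_mem_sideLine (x : ZMod n) : W x ∈ sideLine W x := left_mem_affineSpan_pair ℝ _ _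

theorem right_mem_sideLine (x : ZMod n) : W (x + 1) ∈ sideLine W x :=
  right_mem_affineSpan_pair ℝ _ _

theorem mem_sideLine_of_parallel [Fact (finrank ℝ E = 2)] (hW : ∀ x, W x ≠ W (x + 1)) {P : E}
    {F : ZMod n → E} (hF : ∀ x, F x ∈ sideLine W x ∧ ⟪P - F x, W (x + 1) - W x⟫ = 0)
    (hcol : Collinear ℝ (Set.range F)) {i j k : ZMod n} (hpar : sideLine W i ∥ sideLine W j)
    (hne : sideLine W i ≠ sideLine W j) (hk : ¬sideLine W k ∥ sideLine W i) :
    P ∈ sideLine W k := by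
  set d := W (i + 1) - W i
  have hFj : ⟪P - F j, d⟫ = 0 := by
    have hd : d ∈ ℝ ∙ (W (j + 1) - W j) := by
      rw [← direction_sideLine, ← hpar.direction_eq, direction_sideLine]
      exact mem_span_singleton_self d
    obtain ⟨c, hc⟩ := mem_span_singleton.1 hd
    rw [← hc, real_inner_smul_right, (hF j).2, mul_zero]
  have hM : ∀ x, F x ∈ AffineSubspace.mk' P (ℝ ∙ d)ᗮ ↔ ⟪P - F x, d⟫ = 0 := fun x => by
    rw [AffineSubspace.mem_mk', vsub_eq_sub, mem_orthogonal_singleton_iff_inner_left, ← neg_sub,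
      inner_neg_left, neg_eq_zero]
  have hFij : F i ≠ F j := hpar.ne_of_mem hne (hF i).1 (hF j).1
  have hFk : ⟪P - F k, d⟫ = 0 := (hM k).1 <| hcol.subset_of_mem_of_mem (Set.mem_range_self i)
    (Set.mem_range_self j) hFij ((hM i).2 (hF i).2) ((hM j).2 hFj) (Set.mem_range_self k)
  by_contra hP
  have hPF : P - F k ≠ 0 := sub_ne_zero.2 fun h => hP (h ▸ (hF k).1)
  exact hk (affineSpan_pair_parallel_of_inner_eq_zero (hW k) (hW i) hPF (hF k).2 hFk)

variable (hn : 3 ≤ n) (hnd : ∀ x y z, x ≠ y → x ≠ z → y ≠ z → ¬Collinear ℝ {W x, W y, W z})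
include hn hnd

theorem not_collinear_consecutive (x : ZMod n) : ¬Collinear ℝ {W x, W (x + 1), W (x + 1 + 1)} :=
  hnd _ _ _ (ZMod.add_one_ne_self (by omega) x).symm (ZMod.add_one_add_one_ne_self hn x).symm
    (ZMod.add_one_ne_self (by omega) (x + 1)).symm

theorem apply_ne_apply_add_one (x : ZMod n) : W x ≠ W (x + 1) :=
  ne₁₂_of_not_collinear (not_collinear_consecutive hn hnd x)

theorem sideLine_injective : Function.Injective (sideLine W) := by
  intro x y h
  by_contra hxy
  have hcol {p : E} (hp : p ∈ sideLine W y) : Collinear ℝ {W x, W (x + 1), p} :=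
    collinear_triple_of_mem_affineSpan_pair (left_mem_sideLine x) (right_mem_sideLine x)
      (show p ∈ sideLine W x from h ▸ hp)
  by_cases hyx : y = x + 1
  · subst hyx
    exact not_collinear_consecutive hn hnd x (hcol (right_mem_sideLine _))
  · exact hnd x (x + 1) y (ZMod.add_one_ne_self (by omega) x).symm hxy (Ne.symm hyx)
      (hcol (left_mem_sideLine y))

theorem false_of_mem_three_sideLines {P : E} {k l : ZMod n} (hlk : l ≠ k) (hlk₁ : l ≠ k + 1)
    (hk : P ∈ sideLine W k) (hk₁ : P ∈ sideLine W (k + 1)) (hl : P ∈ sideLine W l) : False := by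
  have hP : P = W (k + 1) := eq_of_mem_affineSpan_pair_of_not_collinear
    (not_collinear_consecutive hn hnd k) hk hk₁
  subst hP
  exact hnd (k + 1) l (l + 1) hlk₁.symm (fun h => hlk (add_right_cancel h).symm)
    (ZMod.add_one_ne_self (by omega) l).symm (collinear_insert_of_mem_affineSpan_pair hl)

theorem not_parallel_of_parallel [Fact (finrank ℝ E = 2)]
    (hconv : ∀ x y z, W y ≠ W x → W y ≠ W (x + 1) → W z ≠ W x → W z ≠ W (x + 1) →
      (sideLine W x).SSameSide (W y) (W z))
    {x y z : ZMod n} (hxy : x ≠ y) (hxz : x ≠ z) (hyz : y ≠ z)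
    (hy : sideLine W x ∥ sideLine W y) : ¬sideLine W x ∥ sideLine W z := by
  intro hz
  have hne {a b : ZMod n} (h : a ≠ b) := (sideLine_injective hn hnd).ne h
  have hsame : ∀ {a b c}, a ≠ b → a ≠ c → sideLine W a ∥ sideLine W b →
      sideLine W a ∥ sideLine W c → (sideLine W a).WSameSide (W b) (W c) := by
    intro a b c hab hac hb hc
    have hb' {p q : E} := hb.ne_of_mem (hne hab) (p := p) (q := q)
    have hc' {p q : E} := hc.ne_of_mem (hne hac) (p := p) (q := q)
    exact (hconv a b c (hb' (left_mem_sideLine a) (left_mem_sideLine b)).symm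
      (hb' (right_mem_sideLine a) (left_mem_sideLine b)).symm
      (hc' (left_mem_sideLine a) (left_mem_sideLine c)).symm
      (hc' (right_mem_sideLine a) (left_mem_sideLine c)).symm).wSameSide
  refine not_wSameSide_of_three_parallel (direction_sideLine x)
    (sub_ne_zero.2 (apply_ne_apply_add_one hn hnd x).symm) hy hz (hne hxy) (hne hxz)
    (hne hyz) (left_mem_sideLine x) (left_mem_sideLine y) (left_mem_sideLine z)
    (hsame hxy hxz hy hz) (hsame hxy.symm hyz hy.symm (hy.symm.trans hz))
    (hsame hxz.symm hyz.symm hz.symm (hz.symm.trans hy))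

end Polygon

theorem not_parallel_sideLine_of_simson {E : Type*} [NormedAddCommGroup E]
    [InnerProductSpace ℝ E] [Fact (finrank ℝ E = 2)] {n : ℕ} (hn : 5 ≤ n) {W : ZMod n → E}
    (hnd : ∀ x y z, x ≠ y → x ≠ z → y ≠ z → ¬Collinear ℝ {W x, W y, W z})
    (hconv : ∀ x y z, W y ≠ W x → W y ≠ W (x + 1) → W z ≠ W x → W z ≠ W (x + 1) →
      (sideLine W x).SSameSide (W y) (W z))
    {P : E} {F : ZMod n → E} (hF : ∀ x, F x ∈ sideLine W x ∧ ⟪P - F x, W (x + 1) - W x⟫ = 0)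
    (hcol : Collinear ℝ (Set.range F)) {i j : ZMod n} (hij : i ≠ j) :
    ¬sideLine W i ∥ sideLine W j := by
  intro hpar
  have hn₃ : 3 ≤ n := by omega
  have : NeZero n := ⟨by omega⟩
  have hP : ∀ k, k ≠ i → k ≠ j → P ∈ sideLine W k := fun k hki hkj =>
    mem_sideLine_of_parallel (apply_ne_apply_add_one hn₃ hnd) hF hcol hpar
      ((sideLine_injective hn₃ hnd).ne hij)
      fun hk => not_parallel_of_parallel hn₃ hnd hconv hij hki.symm hkj.symm hpar hk.symm
  have hcard : 4 < Fintype.card (ZMod n) := by rw [ZMod.card]; omega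
  obtain ⟨k, hki, hkj, hki₁, hkj₁⟩ := exists_ne_of_four_lt_card i j (i - 1) (j - 1) hcard
  obtain ⟨l, hli, hlj, hlk, hlk₁⟩ := exists_ne_of_four_lt_card i j k (k + 1) hcard
  exact false_of_mem_three_sideLines hn₃ hnd hlk hlk₁ (hP k hki hkj)
    (hP (k + 1) (fun h => hki₁ (eq_sub_of_add_eq h)) fun h => hkj₁ (eq_sub_of_add_eq h))
    (hP l hli hlj)

/-- If `Π = V 0 ... V (n-1)` (extended periodically), `n ≥ 5`, is a convex
nondegenerate Simson polygon — i.e. it admits a point `P` whose orthogonal projections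
(feet `F i`) onto all the side lines `Vᵢ Vᵢ₊₁` are collinear — then no two of its side
lines are parallel. -/
theorem stmt_2 (n : ℕ) (hn : 5 ≤ n) (V : ℕ → EuclideanSpace ℝ (Fin 2))
    (hper : ∀ i, V (i + n) = V i)
    -- nondegeneracy: no three vertices are collinear
    (hnd : ∀ i j k, i < j → j < k → k < n →
      ¬ Collinear ℝ ({V i, V j, V k} : Set (EuclideanSpace ℝ (Fin 2))))
    -- convexity: vertices not on the line of side `i` are strictly on the same side of it
    (hconv : ∀ i j k : ℕ, V j ≠ V i → V j ≠ V (i + 1) → V k ≠ V i → V k ≠ V (i + 1) →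
      (affineSpan ℝ ({V i, V (i + 1)} : Set (EuclideanSpace ℝ (Fin 2)))).SSameSide
        (V j) (V k))
    -- `Π` is a Simson polygon, with Simson point `P`:
    (hsimson : ∃ (P : EuclideanSpace ℝ (Fin 2)) (F : ℕ → EuclideanSpace ℝ (Fin 2)),
      (∀ i, F i ∈ affineSpan ℝ ({V i, V (i + 1)} : Set (EuclideanSpace ℝ (Fin 2))) ∧
        ⟪P - F i, V (i + 1) - V i⟫ = 0) ∧
      Collinear ℝ (Set.range F)) :
    ∀ i j, i < n → j < n → i ≠ j →
      ¬ AffineSubspace.Parallel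
        (affineSpan ℝ ({V i, V (i + 1)} : Set (EuclideanSpace ℝ (Fin 2))))
        (affineSpan ℝ ({V j, V (j + 1)} : Set (EuclideanSpace ℝ (Fin 2)))) := by
  intro i j hi hj hij
  have : NeZero n := ⟨by omega⟩
  have : Fact (finrank ℝ (EuclideanSpace ℝ (Fin 2)) = 2) := ⟨finrank_euclideanSpace_fin⟩
  obtain ⟨P, F, hF, hcol⟩ := hsimson
  set W : ZMod n → EuclideanSpace ℝ (Fin 2) := fun x => V x.val
  have hVW (a : ℕ) : V a = W a := by
    simp only [W, ZMod.val_natCast, Function.Periodic.map_mod_nat hper]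
  have hW₁ (x : ZMod n) : W (x + 1) = V (x.val + 1) := by
    rw [hVW]; push_cast; rw [ZMod.natCast_zmod_val]
  have hside (a : ℕ) : line[ℝ, V a, V (a + 1)] = sideLine W a := by
    rw [sideLine, hVW, hVW]; push_cast; rfl
  rw [hside, hside]
  refine not_parallel_sideLine_of_simson hn (F := fun x => F x.val) (P := P) ?_ ?_ ?_ ?_ ?_
  · intro x y z hxy hxz hyz
    exact not_collinear_of_ne hnd ((ZMod.val_injective n).ne hxy) ((ZMod.val_injective n).ne hxz)
      ((ZMod.val_injective n).ne hyz) (ZMod.val_lt x) (ZMod.val_lt y) (ZMod.val_lt z)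
  · intro x y z h₁ h₂ h₃ h₄
    rw [hW₁] at h₂ h₄
    rw [sideLine, hW₁]
    exact hconv _ _ _ h₁ h₂ h₃ h₄
  · intro x
    rw [sideLine, hW₁]
    exact hF x.val
  · exact hcol.subset (Set.range_comp_subset_range _ _)
  · rwa [Ne, ZMod.natCast_eq_natCast_iff', Nat.mod_eq_of_lt hi, Nat.mod_eq_of_lt hj]
end

section
/- A convex nondegenerate pentagon does not admit a Simson point. -/
open EuclideanGeometry RealInnerProductSpace

section Aux

local notation "E2" => EuclideanSpace ℝ (Fin 2)

private lemma e2_coord_ne {n : E2} (h : n ≠ 0) : n 0 ≠ 0 ∨ n 1 ≠ 0 := by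
  by_contra hc
  push_neg at hc
  exact h (by ext i; fin_cases i <;> simp [hc.1, hc.2])

private lemma inner_coords (x y : E2) : ⟪x, y⟫ = x 0 * y 0 + x 1 * y 1 := by
  simp [PiLp.inner_apply, RCLike.inner_apply, Fin.sum_univ_two, mul_comm]

private lemma par {u w n : E2} (hn : n ≠ 0) (hu : ⟪u, n⟫ = 0) (hw : ⟪w, n⟫ = 0)
    (hw0 : w ≠ 0) : ∃ c : ℝ, u = c • w := by
  rw [inner_coords] at hu hw
  have hcross : u 0 * w 1 - u 1 * w 0 = 0 := by
    rcases e2_coord_ne hn with h | h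
    · have h1 : u 0 = -(u 1 * n 1) / n 0 := by field_simp; linarith
      have h2 : w 0 = -(w 1 * n 1) / n 0 := by field_simp; linarith
      rw [h1, h2]; field_simp; ring
    · have h1 : u 1 = -(u 0 * n 0) / n 1 := by field_simp; linarith
      have h2 : w 1 = -(w 0 * n 0) / n 1 := by field_simp; linarith
      rw [h1, h2]; field_simp; ring
  rcases e2_coord_ne hw0 with h | h
  · refine ⟨u 0 / w 0, ?_⟩
    ext i; fin_cases i
    · show u 0 = u 0 / w 0 * w 0; field_simp
    · show u 1 = u 0 / w 0 * w 1; field_simp; linarith [hcross]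
  · refine ⟨u 1 / w 1, ?_⟩
    ext i; fin_cases i
    · show u 0 = u 1 / w 1 * w 0; field_simp; linarith [hcross]
    · show u 1 = u 1 / w 1 * w 1; field_simp

private lemma mem_line {x y p : E2} (c : ℝ) (h : p - x = c • (y - x)) :
    p ∈ affineSpan ℝ ({x, y} : Set E2) := by
  have h1 : p = (p - x) +ᵥ x := by simp
  rw [h1]
  exact vadd_left_mem_affineSpan_pair.2 ⟨c, by simp [h]⟩

private lemma line_mem {x y p : E2} (h : p ∈ affineSpan ℝ ({x, y} : Set E2)) :
    ∃ c : ℝ, p - x = c • (y - x) := by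
  rw [show p = (p -ᵥ x) +ᵥ x from by simp] at h
  obtain ⟨c, hc⟩ := vadd_left_mem_affineSpan_pair.1 h
  exact ⟨c, by simpa using hc.symm⟩

private lemma tri_comm (a b c : E2) : ({c, a, b} : Set E2) = {a, b, c} := by
  ext p; simp; tauto

private lemma col {x y z q n : E2} (hn : n ≠ 0) (hx : ⟪x - q, n⟫ = 0) (hy : ⟪y - q, n⟫ = 0)
    (hz : ⟪z - q, n⟫ = 0) : Collinear ℝ ({x, y, z} : Set E2) := by
  by_cases hyx : y = x
  · rw [hyx, Set.insert_idem]
    exact collinear_pair ℝ x z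
  · have hzx : ⟪z - x, n⟫ = 0 := by
      have h1 : z - x = (z - q) - (x - q) := by abel
      rw [h1, inner_sub_left, hx, hz]; ring
    have hyx' : ⟪y - x, n⟫ = 0 := by
      have h1 : y - x = (y - q) - (x - q) := by abel
      rw [h1, inner_sub_left, hx, hy]; ring
    obtain ⟨c, hc⟩ := par hn hzx hyx' (sub_ne_zero.2 hyx)
    have hmem : z ∈ affineSpan ℝ ({x, y} : Set E2) := mem_line c hc
    have h2 := collinear_insert_of_mem_affineSpan_pair hmem
    rwa [tri_comm] at h2

private lemma ss {p q F n x y : E2} (hpq : p ≠ q) (hn : n ≠ 0)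
    (hp : ⟪p - F, n⟫ = 0) (hq : ⟪q - F, n⟫ = 0)
    (hss : (affineSpan ℝ ({p, q} : Set E2)).SSameSide x y) :
    0 < ⟪x - F, n⟫ * ⟪y - F, n⟫ := by
  have hmem0 : ∀ r ∈ affineSpan ℝ ({p, q} : Set E2), ⟪r - F, n⟫ = 0 := by
    intro r hr
    have h1 : r = (r -ᵥ p) +ᵥ p := by simp
    rw [h1] at hr
    obtain ⟨c, hc⟩ := vadd_left_mem_affineSpan_pair.1 hr
    have h2 : r - F = c • (q - p) + (p - F) := by
      have h4 : r - p = c • (q - p) := by simpa using hc.symm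
      have h3 : r - F = (r - p) + (p - F) := by abel
      rw [h3, h4]
    have hqp : ⟪q - p, n⟫ = 0 := by
      have h3 : q - p = (q - F) - (p - F) := by abel
      rw [h3, inner_sub_left, hp, hq]; ring
    rw [h2, inner_add_left, real_inner_smul_left, hp, hqp]; ring
  have hzero : ∀ r : E2, ⟪r - F, n⟫ = 0 → r ∈ affineSpan ℝ ({p, q} : Set E2) := by
    intro r hr
    have h1 : ⟪r - p, n⟫ = 0 := by
      have h3 : r - p = (r - F) - (p - F) := by abel
      rw [h3, inner_sub_left, hp, hr]; ring
    have h2 : ⟪q - p, n⟫ = 0 := by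
      have h3 : q - p = (q - F) - (p - F) := by abel
      rw [h3, inner_sub_left, hp, hq]; ring
    obtain ⟨c, hc⟩ := par hn h1 h2 (sub_ne_zero.2 (Ne.symm hpq))
    exact mem_line c hc
  obtain ⟨⟨p₁, hp₁, p₂, hp₂, hray⟩, hxs, hys⟩ := hss
  have hx1 : x -ᵥ p₁ ≠ 0 := by
    intro h; exact hxs (by rw [show x = p₁ from by rwa [vsub_eq_sub, sub_eq_zero] at h]; exact hp₁)
  have hy2 : y -ᵥ p₂ ≠ 0 := by
    intro h; exact hys (by rw [show y = p₂ from by rwa [vsub_eq_sub, sub_eq_zero] at h]; exact hp₂)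
  obtain ⟨r₁, r₂, hr₁, hr₂, hre⟩ := hray.exists_pos hx1 hy2
  have hfx : ⟪x - F, n⟫ ≠ 0 := fun h => hxs (hzero x h)
  have key : r₁ * ⟪x - F, n⟫ = r₂ * ⟪y - F, n⟫ := by
    have e1 : ⟪x - F, n⟫ = ⟪x - p₁, n⟫ := by
      have h3 : x - F = (x - p₁) + (p₁ - F) := by abel
      rw [h3, inner_add_left, hmem0 p₁ hp₁]; ring
    have e2 : ⟪y - F, n⟫ = ⟪y - p₂, n⟫ := by
      have h3 : y - F = (y - p₂) + (p₂ - F) := by abel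
      rw [h3, inner_add_left, hmem0 p₂ hp₂]; ring
    rw [e1, e2, ← real_inner_smul_left, ← real_inner_smul_left]
    rw [show r₁ • (x - p₁) = r₂ • (y - p₂) from by simpa using hre]
  have h5 : r₂ * (⟪x - F, n⟫ * ⟪y - F, n⟫) = r₁ * (⟪x - F, n⟫ * ⟪x - F, n⟫) := by
    linear_combination (- (⟪x - F, n⟫ : ℝ)) * key
  nlinarith [h5, mul_pos hr₁ (mul_self_pos.2 hfx), hr₂]

private lemma fin5_bool (q : Fin 5 → Bool) :
    (∃ i, q i = false ∧ q (i + 1) = false) ∨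
    (∃ i k, k ≠ i ∧ k ≠ i + 1 ∧ q i = true ∧ q (i + 1) = true ∧ q k = true) := by
  revert q; decide

end Aux

/-- A convex nondegenerate pentagon `ABCDE` does not admit a Simson point,
i.e. there is no point `P` whose orthogonal projections onto the five side lines
`AB`, `BC`, `CD`, `DE`, `EA` are collinear.  Here `V = ![A,B,C,D,E]`, nondegeneracy means
no three vertices are collinear, and convexity means that the vertices off a given side
line lie strictly on the same side of it. -/
theorem stmt_3 (A B C D E : EuclideanSpace ℝ (Fin 2)) (V : Fin 5 → EuclideanSpace ℝ (Fin 2))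
    (hV : V = ![A, B, C, D, E])
    -- nondegeneracy: no three vertices are collinear
    (hnd : ∀ i j k : Fin 5, i ≠ j → i ≠ k → j ≠ k →
      ¬ Collinear ℝ ({V i, V j, V k} : Set (EuclideanSpace ℝ (Fin 2))))
    -- convexity: vertices not on the line of side `i` are strictly on the same side of it
    (hconv : ∀ i j k : Fin 5, j ≠ i → j ≠ i + 1 → k ≠ i → k ≠ i + 1 →
      (affineSpan ℝ ({V i, V (i + 1)} : Set (EuclideanSpace ℝ (Fin 2)))).SSameSide
        (V j) (V k)) :
    ¬ ∃ (P : EuclideanSpace ℝ (Fin 2)) (F : Fin 5 → EuclideanSpace ℝ (Fin 2)),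
      (∀ i : Fin 5, F i ∈ affineSpan ℝ ({V i, V (i + 1)} : Set (EuclideanSpace ℝ (Fin 2))) ∧
        ⟪P - F i, V (i + 1) - V i⟫ = 0) ∧
      Collinear ℝ (Set.range F) := by
  rintro ⟨P, F, hF, hcolF⟩
  classical
  -- basic Fin 5 facts
  have f1 : ∀ i : Fin 5, i ≠ i + 1 := by decide
  have f2 : ∀ i : Fin 5, i ≠ i + 1 + 1 := by decide
  have e12 : ∀ i : Fin 5, i + 1 + 1 = i + 2 := by decide
  have e23 : ∀ i : Fin 5, i + 2 + 1 = i + 3 := by decide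
  have e34 : ∀ i : Fin 5, i + 3 + 1 = i + 4 := by decide
  -- vertices are pairwise distinct
  have hVne : ∀ i j : Fin 5, i ≠ j → V i ≠ V j := by
    intro i j hij heq
    obtain ⟨k, hk1, hk2⟩ := (show ∀ i j : Fin 5, i ≠ j → ∃ k, k ≠ i ∧ k ≠ j by decide) i j hij
    apply hnd i j k hij (Ne.symm hk1) (Ne.symm hk2)
    rw [heq, Set.insert_idem]
    exact collinear_pair ℝ (V j) (V k)
  -- the feet are orthogonal projections: both endpoints of side i satisfy ⟪· - F i, P - F i⟫ = 0
  have hkey : ∀ i : Fin 5, ⟪V i - F i, P - F i⟫ = 0 ∧ ⟪V (i + 1) - F i, P - F i⟫ = 0 := by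
    intro i
    obtain ⟨hmem, hperp⟩ := hF i
    obtain ⟨c, hc⟩ := line_mem hmem  -- F i - V i = c • (V (i+1) - V i)
    constructor
    · have h1 : V i - F i = (-c) • (V (i + 1) - V i) := by
        rw [neg_smul, ← hc]; abel
      rw [h1, real_inner_smul_left, real_inner_comm, hperp]; ring
    · have h1 : V (i + 1) - F i = (1 - c) • (V (i + 1) - V i) := by
        rw [sub_smul, one_smul, ← hc]; abel
      rw [h1, real_inner_smul_left, real_inner_comm, hperp]; ring
  -- Lemma D: two distinct feet cannot coincide away from P
  have hD : ∀ i j : Fin 5, i ≠ j → F i = F j → P ≠ F i → False := by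
    intro i j hij hFij hPF
    have hn : P - F i ≠ 0 := sub_ne_zero.2 hPF
    have hji : ⟪V j - F i, P - F i⟫ = 0 := by rw [hFij]; exact (hkey j).1
    have hj1i : ⟪V (j + 1) - F i, P - F i⟫ = 0 := by rw [hFij]; exact (hkey j).2
    rcases (show ∀ i j : Fin 5, i ≠ j → j = i + 1 ∨ i = j + 1 ∨ (j ≠ i + 1 ∧ i ≠ j + 1)
        by decide) i j hij with h | h | ⟨h1, h2⟩
    · subst h
      exact hnd i (i + 1) (i + 1 + 1) (f1 i) (f2 i) (f1 (i + 1))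
        (col hn (hkey i).1 (hkey i).2 hj1i)
    · subst h
      exact hnd j (j + 1) (j + 1 + 1) (f1 j) (f2 j) (f1 (j + 1))
        (col hn hji hj1i (hkey (j + 1)).2)
    · exact hnd i (i + 1) j (f1 i) hij (Ne.symm h1)
        (col hn (hkey i).1 (hkey i).2 hji)
  -- Lemma E: three side lines cannot pass through P
  have hE : ∀ i k : Fin 5, k ≠ i → k ≠ i + 1 → F i = P → F (i + 1) = P → F k = P → False := by
    intro i k hki hki1 hFi hFi1 hFk
    have hPi : P ∈ affineSpan ℝ ({V i, V (i + 1)} : Set (EuclideanSpace ℝ (Fin 2))) := by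
      rw [← hFi]; exact (hF i).1
    have hPi1 : P ∈ affineSpan ℝ
        ({V (i + 1), V (i + 1 + 1)} : Set (EuclideanSpace ℝ (Fin 2))) := by
      rw [← hFi1]; exact (hF (i + 1)).1
    have hPk : P ∈ affineSpan ℝ ({V k, V (k + 1)} : Set (EuclideanSpace ℝ (Fin 2))) := by
      rw [← hFk]; exact (hF k).1
    by_cases hPV : P = V (i + 1)
    · apply hnd (i + 1) k (k + 1) (Ne.symm hki1)
        ((show ∀ i k : Fin 5, k ≠ i → i + 1 ≠ k + 1 by decide) i k hki) (f1 k)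
      rw [hPV] at hPk
      exact collinear_insert_of_mem_affineSpan_pair hPk
    · obtain ⟨c, hc⟩ := line_mem hPi
      obtain ⟨c', hc'⟩ := line_mem hPi1
      have hc'0 : c' ≠ 0 := by
        intro h
        rw [h, zero_smul] at hc'
        exact hPV (sub_eq_zero.1 hc')
      have hkey2 : V (i + 1 + 1) - V i = (c'⁻¹ * (c - 1) + 1) • (V (i + 1) - V i) := by
        have h1 : V (i + 1 + 1) - V (i + 1) = c'⁻¹ • (P - V (i + 1)) := by
          rw [hc', smul_smul, inv_mul_cancel₀ hc'0, one_smul]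
        have h2 : P - V (i + 1) = (c - 1) • (V (i + 1) - V i) := by
          rw [sub_smul, one_smul, ← hc]; abel
        rw [show V (i + 1 + 1) - V i = (V (i + 1 + 1) - V (i + 1)) + (V (i + 1) - V i) by abel,
          h1, h2, smul_smul, add_smul, one_smul]
      have hmem := mem_line _ hkey2
      have hcol3 := collinear_insert_of_mem_affineSpan_pair hmem
      rw [tri_comm] at hcol3
      exact hnd i (i + 1) (i + 1 + 1) (f1 i) (f2 i) (f1 (i + 1)) hcol3
  by_cases hFc : ∀ i, F i = F 0
  · -- constant feet
    by_cases hFP : F 0 = P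
    · exact hE 0 2 (by decide) (by decide) hFP
        (by rw [show (0 : Fin 5) + 1 = 1 from rfl, hFc 1]; exact hFP)
        (by rw [hFc 2]; exact hFP)
    · exact hD 0 1 (by decide) (hFc 1).symm (Ne.symm hFP)
  · push_neg at hFc
    obtain ⟨i₂, hi₂⟩ := hFc
    obtain ⟨v, htv⟩ := (collinear_iff_of_mem (Set.mem_range_self (0 : Fin 5))).1 hcolF
    choose t ht using fun i : Fin 5 => htv (F i) (Set.mem_range_self i)
    simp only [vadd_eq_add] at ht
    have hv0 : v ≠ 0 := by
      intro h
      apply hi₂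
      rw [ht i₂, ht 0, h]
      simp
    by_cases hP : ∃ r : ℝ, P = r • v + F 0
    · -- P lies on the line of the feet
      obtain ⟨r, hr⟩ := hP
      have hperpv : ∀ i : Fin 5, F i ≠ P → ⟪V (i + 1) - V i, v⟫ = 0 := by
        intro i hFiP
        have hdiff : P - F i = (r - t i) • v := by rw [hr, ht i, sub_smul]; abel
        have hrt : r - t i ≠ 0 := by
          intro h
          apply hFiP
          rw [ht i, hr, show r = t i by linarith [sub_eq_zero.1 h]]
        have h2 := (hF i).2
        rw [hdiff, real_inner_smul_left] at h2
        rw [real_inner_comm]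
        exact (mul_eq_zero.1 h2).resolve_left hrt
      rcases fin5_bool (fun i => decide (F i = P)) with ⟨i, hi, hi1⟩ |
        ⟨i, k, hki, hki1, hqi, hqi1, hqk⟩
      · simp only [decide_eq_false_iff_not] at hi hi1
        have h1 := hperpv i hi
        have h2 := hperpv (i + 1) hi1
        apply hnd i (i + 1) (i + 1 + 1) (f1 i) (f2 i) (f1 (i + 1))
        apply col hv0 (q := V (i + 1)) ?_ ?_ h2
        · rw [show V i - V (i + 1) = -(V (i + 1) - V i) by abel, inner_neg_left, h1, neg_zero]
        · simp
      · simp only [decide_eq_true_eq] at hqi hqi1 hqk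
        exact hE i k hki hki1 hqi hqi1 hqk
    · -- main case: P is off the line of the feet
      have hPF : ∀ i : Fin 5, P ≠ F i := by
        intro i h
        exact hP ⟨t i, by rw [h, ht i]⟩
      have htinj : ∀ i j : Fin 5, i ≠ j → t i ≠ t j := by
        intro i j hij he
        exact hD i j hij (by rw [ht i, ht j, he]) (hPF i)
      have hG : ∀ i j : Fin 5, ⟪V j - F i, P - F i⟫ =
          ⟪V j - F 0, P - F 0⟫ - t i * (⟪v, P - F 0⟫ + ⟪V j - F 0, v⟫) +
            (t i) ^ 2 * ⟪v, v⟫ := by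
        intro i j
        rw [ht i]
        rw [show V j - (t i • v + F 0) = (V j - F 0) - t i • v from by abel,
            show P - (t i • v + F 0) = (P - F 0) - t i • v from by abel]
        simp only [inner_sub_left, inner_sub_right, real_inner_smul_left, real_inner_smul_right]
        ring
      have hroot1 : ∀ i : Fin 5, ⟪V i - F 0, P - F 0⟫ -
          t i * (⟪v, P - F 0⟫ + ⟪V i - F 0, v⟫) + (t i) ^ 2 * ⟪v, v⟫ = 0 := fun i => by
        rw [← hG i i]; exact (hkey i).1
      have hroot2 : ∀ i : Fin 5, ⟪V (i + 1) - F 0, P - F 0⟫ -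
          t i * (⟪v, P - F 0⟫ + ⟪V (i + 1) - F 0, v⟫) + (t i) ^ 2 * ⟪v, v⟫ = 0 := fun i => by
        rw [← hG i (i + 1)]; exact (hkey i).2
      have hfac : ∀ i j : Fin 5, ⟪V (j + 1) - F i, P - F i⟫ =
          ⟪v, v⟫ * (t i - t j) * (t i - t (j + 1)) := by
        intro i j
        have e1 := hroot2 j
        have e2 := hroot1 (j + 1)
        have hne : t j - t (j + 1) ≠ 0 := sub_ne_zero.2 (htinj j (j + 1) (f1 j))
        have hA : (⟪v, P - F 0⟫ + ⟪V (j + 1) - F 0, v⟫) * (t j - t (j + 1)) =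
            ⟪v, v⟫ * (t j + t (j + 1)) * (t j - t (j + 1)) := by linear_combination e2 - e1
        have hA' := mul_right_cancel₀ hne hA
        have hB : ⟪V (j + 1) - F 0, P - F 0⟫ = ⟪v, v⟫ * (t j * t (j + 1)) := by
          linear_combination e1 + t j * hA'
        rw [hG i (j + 1)]
        linear_combination hB - t i * hA'
      have ha : (0 : ℝ) < ⟪v, v⟫ := by
        rw [inner_coords]
        rcases e2_coord_ne hv0 with h | h
        · nlinarith [mul_self_pos.2 h, mul_self_nonneg (v 1)]
        · nlinarith [mul_self_pos.2 h, mul_self_nonneg (v 0)]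
      have hsign : ∀ i j k : Fin 5, j ≠ i → j ≠ i + 1 → k ≠ i → k ≠ i + 1 →
          0 < ⟪V j - F i, P - F i⟫ * ⟪V k - F i, P - F i⟫ := by
        intro i j k h1 h2 h3 h4
        exact ss (hVne i (i + 1) (f1 i)) (sub_ne_zero.2 (hPF i)) (hkey i).1 (hkey i).2
          (hconv i j k h1 h2 h3 h4)
      obtain ⟨i₀, -, hmax⟩ := Finset.exists_max_image Finset.univ t ⟨0, Finset.mem_univ 0⟩
      obtain ⟨i₁, hi₁mem, hmax1⟩ := Finset.exists_max_image (Finset.univ.erase i₀) t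
        ⟨i₀ + 1, Finset.mem_erase.2 ⟨(f1 i₀).symm, Finset.mem_univ _⟩⟩
      have hi₁ : i₁ ≠ i₀ := (Finset.mem_erase.1 hi₁mem).1
      have hlt : ∀ j : Fin 5, j ≠ i₀ → j ≠ i₁ → t j < t i₁ := by
        intro j h0 h1
        exact lt_of_le_of_ne (hmax1 j (Finset.mem_erase.2 ⟨h0, Finset.mem_univ _⟩))
          (htinj j i₁ h1)
      have hlt0 : t i₁ < t i₀ := lt_of_le_of_ne (hmax i₁ (Finset.mem_univ _)) (htinj i₁ i₀ hi₁)
      have g1 := hfac i₁ (i₁ + 1); rw [e12 i₁] at g1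
      have g2 := hfac i₁ (i₁ + 2); rw [e23 i₁] at g2
      have g3 := hfac i₁ (i₁ + 3); rw [e34 i₁] at g3
      obtain ⟨d1, d2, d3, d4, d5, d6⟩ := (show ∀ i : Fin 5, i + 2 ≠ i ∧ i + 2 ≠ i + 1 ∧
        i + 3 ≠ i ∧ i + 3 ≠ i + 1 ∧ i + 4 ≠ i ∧ i + 4 ≠ i + 1 by decide) i₁
      have h23 := hsign i₁ (i₁ + 2) (i₁ + 3) d1 d2 d3 d4
      have h34 := hsign i₁ (i₁ + 3) (i₁ + 4) d3 d4 d5 d6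
      rw [g1, g2] at h23
      rw [g2, g3] at h34
      rcases (show ∀ x y : Fin 5, x ≠ y → x = y + 1 ∨ x = y + 2 ∨ x = y + 3 ∨ x = y + 4
          by decide) i₀ i₁ (Ne.symm hi₁) with hc | hc | hc | hc
      · have hu1 : t i₁ - t (i₁ + 1) < 0 := by rw [← hc]; linarith
        have hu2 : 0 < t i₁ - t (i₁ + 2) := by
          have := hlt (i₁ + 2) (by rw [hc]; exact d2) d1; linarith
        have hu3 : 0 < t i₁ - t (i₁ + 3) := by
          have := hlt (i₁ + 3) (by rw [hc]; exact d4) d3; linarith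
        nlinarith [h23, mul_neg_of_neg_of_pos hu1
          (mul_pos (mul_pos ha hu2) (mul_pos (mul_pos ha hu2) hu3))]
      · have hu2 : t i₁ - t (i₁ + 2) < 0 := by rw [← hc]; linarith
        have hu3 : 0 < t i₁ - t (i₁ + 3) := by
          have := hlt (i₁ + 3)
            (by rw [hc]; exact (show ∀ x : Fin 5, x + 3 ≠ x + 2 by decide) i₁) d3; linarith
        have hu4 : 0 < t i₁ - t (i₁ + 4) := by
          have := hlt (i₁ + 4)
            (by rw [hc]; exact (show ∀ x : Fin 5, x + 4 ≠ x + 2 by decide) i₁) d5; linarith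
        nlinarith [h34, mul_neg_of_neg_of_pos hu2
          (mul_pos (mul_pos ha hu3) (mul_pos (mul_pos ha hu3) hu4))]
      · have hu3 : t i₁ - t (i₁ + 3) < 0 := by rw [← hc]; linarith
        have hu1 : 0 < t i₁ - t (i₁ + 1) := by
          have := hlt (i₁ + 1)
            (by rw [hc]; exact (show ∀ x : Fin 5, x + 1 ≠ x + 3 by decide) i₁)
            (Ne.symm (f1 i₁)); linarith
        have hu2 : 0 < t i₁ - t (i₁ + 2) := by
          have := hlt (i₁ + 2)
            (by rw [hc]; exact (show ∀ x : Fin 5, x + 2 ≠ x + 3 by decide) i₁) d1; linarith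
        nlinarith [h23, mul_neg_of_neg_of_pos hu3
          (mul_pos (mul_pos ha hu2) (mul_pos (mul_pos ha hu2) hu1))]
      · have hu4 : t i₁ - t (i₁ + 4) < 0 := by rw [← hc]; linarith
        have hu2 : 0 < t i₁ - t (i₁ + 2) := by
          have := hlt (i₁ + 2)
            (by rw [hc]; exact (show ∀ x : Fin 5, x + 2 ≠ x + 4 by decide) i₁) d1; linarith
        have hu3 : 0 < t i₁ - t (i₁ + 3) := by
          have := hlt (i₁ + 3)
            (by rw [hc]; exact (show ∀ x : Fin 5, x + 3 ≠ x + 4 by decide) i₁) d3; linarith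
        nlinarith [h34, mul_neg_of_neg_of_pos hu4
          (mul_pos (mul_pos ha hu3) (mul_pos (mul_pos ha hu3) hu2))]
end

section
/- Let S = (0, s) with s ≠ 0, and for real numbers X and Δ > 0 let Xᵢ = (X + (i−1)Δ, 0) on the x-axis. Let ℓᵢ be the line through Xᵢ perpendicular to the segment SXᵢ, and let Vᵢ = ℓᵢ ∩ ℓᵢ₊₁. Then Vᵢ = (2X + (2i−1)Δ, (X + (i−1)Δ)(X + iΔ)/s), and each Vᵢ lies on the parabola y = (x² − Δ²)/(4s), which is independent of X. -/
/-- With `S = (0,s)`, `s ≠ 0`, `Xᵢ = (X+(i-1)Δ, 0)` on the x-axis, if `V` lies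
on the line through `Xᵢ` perpendicular to `SXᵢ` and on the line through `Xᵢ₊₁` perpendicular
to `SXᵢ₊₁`, then `V = (2X+(2i-1)Δ, (X+(i-1)Δ)(X+iΔ)/s)` and `V` lies on the parabola
`y = (x² - Δ²)/(4s)` (which is independent of `X`). -/
theorem stmt_5 (s X Δ : ℝ) (hs : s ≠ 0) (hΔ : 0 < Δ) (i : ℕ) (V : ℝ × ℝ)
    (h1 : (V.1 - (X + ((i : ℝ) - 1) * Δ)) * (0 - (X + ((i : ℝ) - 1) * Δ))
        + (V.2 - 0) * (s - 0) = 0)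
    (h2 : (V.1 - (X + (i : ℝ) * Δ)) * (0 - (X + (i : ℝ) * Δ))
        + (V.2 - 0) * (s - 0) = 0) :
    V = (2 * X + (2 * (i : ℝ) - 1) * Δ, (X + ((i : ℝ) - 1) * Δ) * (X + (i : ℝ) * Δ) / s)
      ∧ V.2 = (V.1 ^ 2 - Δ ^ 2) / (4 * s) := by
  have hΔ' : Δ ≠ 0 := ne_of_gt hΔ
  have hx : V.1 = 2 * X + (2 * (i : ℝ) - 1) * Δ := by
    have := sub_eq_zero.mpr (h2.trans h1.symm)
    have h : Δ * (V.1 - (2 * X + (2 * (i : ℝ) - 1) * Δ)) = 0 := by ring_nf; ring_nf at this; linarith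
    rcases mul_eq_zero.mp h with h | h
    · exact absurd h hΔ'
    · linarith [sub_eq_zero.mp h]
  have hy : V.2 = (X + ((i : ℝ) - 1) * Δ) * (X + (i : ℝ) * Δ) / s := by
    field_simp
    linear_combination h1 + (X + ((i : ℝ) - 1) * Δ) * hx
  refine ⟨Prod.ext hx hy, ?_⟩
  rw [hx, hy]
  field_simp
  ring
end

section
/- For fixed a < b, s ≠ 0 and n ≥ 2, the function S(x₁,...,x_{n−1}) = Σ_{i=0}^{n−1} (x_{i+1} − x_i)³, with x₀ = a, x_n = b and a < x₁ < ... < x_{n−1} < b, is minimized exactly when the x_i form an arithmetic progression, i.e., x_i = a + i(b−a)/n. Consequently, the optimal continuous piecewise linear interpolant of the parabola f(x) = (x²−Δ²)/(4s) on [a,b] with n pieces (minimizing ∫_a^b |f − l|) has equally spaced knots. -/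
/-- For `a < b` and `n ≥ 2`, subject to `x 0 = a`, `x n = b` and
`x 0 < x 1 < ... < x n`, the quantity `S = ∑_{i=0}^{n-1} (x_{i+1} - x_i)³` satisfies
`S ≥ (b-a)³/n²`, with equality if and only if the knots `x i` form the arithmetic
progression `x i = a + i (b-a)/n` (equally spaced knots).  By the formula
`∫_a^b |f - l| = (1/(24|s|)) ∑ (x_{i+1}-x_i)³` for the parabola `f x = (x²-Δ²)/(4s)`,
this says that the optimal continuous piecewise linear interpolant of the parabola
has equally spaced knots. -/
theorem stmt_9 (s Δ a b : ℝ) (hs : s ≠ 0) (hab : a < b) (n : ℕ) (hn : 2 ≤ n)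
    (x : ℕ → ℝ) (hx0 : x 0 = a) (hxn : x n = b) (hmono : ∀ i < n, x i < x (i + 1)) :
    (b - a) ^ 3 / (n : ℝ) ^ 2 ≤ ∑ i ∈ Finset.range n, (x (i + 1) - x i) ^ 3 ∧
    ((∑ i ∈ Finset.range n, (x (i + 1) - x i) ^ 3 = (b - a) ^ 3 / (n : ℝ) ^ 2) ↔
      ∀ i ≤ n, x i = a + (i : ℝ) * ((b - a) / (n : ℝ))) := by
  have hn0 : (0 : ℝ) < n := by positivity
  set d : ℕ → ℝ := fun i => x (i + 1) - x i with hd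
  have hsum : ∑ i ∈ Finset.range n, d i = b - a := by
    rw [Finset.sum_range_sub (fun i => x i), hx0, hxn]
  have hw : ∑ _i ∈ Finset.range n, (1 / (n : ℝ)) = 1 := by
    simp [Finset.sum_const]
    field_simp
  have h₀ : ∀ i ∈ Finset.range n, 0 < (1 / (n : ℝ)) := fun i _ => by positivity
  have hmem : ∀ i ∈ Finset.range n, d i ∈ Set.Ici (0 : ℝ) := by
    intro i hi
    have := hmono i (Finset.mem_range.mp hi)
    simp [hd]; linarith
  have hcm : ∑ i ∈ Finset.range n, (1 / (n : ℝ)) • d i = (b - a) / n := by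
    rw [← Finset.smul_sum, hsum, smul_eq_mul]; ring
  have hconv := strictConvexOn_pow (n := 3) (by norm_num)
  -- Jensen inequality
  have hle := hconv.convexOn.map_sum_le (t := Finset.range n) (w := fun _ => 1 / (n : ℝ))
    (p := d) (fun i hi => (h₀ i hi).le) hw hmem
  rw [hcm] at hle
  simp only [smul_eq_mul, ← Finset.mul_sum] at hle
  have hle' : (b - a) ^ 3 / (n : ℝ) ^ 2 ≤ ∑ i ∈ Finset.range n, d i ^ 3 := by
    rw [div_pow] at hle
    rw [div_le_iff₀ (by positivity : (0:ℝ) < (n:ℝ)^2)]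
    rw [div_le_iff₀ (by positivity : (0:ℝ) < (n:ℝ)^3)] at hle
    have e : (1 / (n:ℝ) * ∑ i ∈ Finset.range n, d i ^ 3) * (n:ℝ) ^ 3
        = (∑ i ∈ Finset.range n, d i ^ 3) * (n:ℝ) ^ 2 := by
      field_simp
    linarith [hle, e.symm.le]
  refine ⟨hle', ?_⟩
  -- equality case
  have heq := hconv.map_sum_eq_iff (t := Finset.range n) (w := fun _ => 1 / (n : ℝ))
    (p := d) h₀ hw hmem
  rw [hcm] at heq
  simp only [smul_eq_mul, ← Finset.mul_sum, div_pow] at heq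
  have key : (∑ i ∈ Finset.range n, (x (i + 1) - x i) ^ 3 = (b - a) ^ 3 / (n : ℝ) ^ 2)
      ↔ ∀ j ∈ Finset.range n, d j = (b - a) / n := by
    rw [← heq]
    constructor
    · intro h
      simp only [hd]
      rw [h]; ring
    · intro h
      simp only [hd] at h
      have hne : (n:ℝ) ≠ 0 := ne_of_gt hn0
      calc ∑ i ∈ Finset.range n, (x (i+1) - x i)^3
          = (n:ℝ) * (1 / n * ∑ i ∈ Finset.range n, (x (i+1) - x i)^3) := by
            field_simp
        _ = (n:ℝ) * ((b - a)^3 / (n:ℝ)^3) := by rw [← h]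
        _ = (b - a)^3 / (n:ℝ)^2 := by field_simp
  rw [key]
  constructor
  · intro h i hi
    induction i with
    | zero => simpa using hx0
    | succ k ih =>
      have hk : k ≤ n := Nat.le_of_succ_le hi
      have hk' : k < n := hi
      have := h k (Finset.mem_range.mpr hk')
      have hxk := ih hk
      simp only [hd] at this
      push_cast
      rw [show x (k+1) = x k + (b-a)/n by linarith, hxk]
      ring
  · intro h j hj
    have hj' := Finset.mem_range.mp hj
    have h1 := h j (le_of_lt hj')
    have h2 := h (j+1) hj'
    simp only [hd]
    rw [h1, h2]
    push_cast
    ring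
end

section
/- In the setup Vᵢ = (2X + (2i−1)Δ, (X+(i−1)Δ)(X+iΔ)/s), if j − i > 0 is even then segments VᵢVⱼ, V_{i+1}V_{j−1}, ... are parallel to each other and parallel to the tangent line of the parabola y = (x² − Δ²)/(4s) at the point V_{(i+j)/2}. -/
/-!
Every `Vᵢ` lies on the parabola `y = (x² - Δ²)/(4s)`, because
`(X + (i-1)Δ)(X + iΔ) = (xᵢ - Δ)(xᵢ + Δ)/4` for the abscissa `xᵢ = 2X + (2i-1)Δ`. The chord of
this parabola between abscissas `a` and `b` has slope `(a + b)/(4s)`, the tangent slope at the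
midpoint `(a + b)/2`. Since `xᵢ` is affine in `i`, the sum `x_a + x_b` depends only on `a + b`,
so all chords `V_{i+t}V_{j-t}` share the slope of the tangent at `x_{(i+j)/2}`.
-/

lemma deriv_sq_sub_div (c d x : ℝ) :
    deriv (fun x : ℝ => (x ^ 2 - c) / d) x = 2 * x / d := by
  simp [(((hasDerivAt_pow 2 x).sub_const c).div_const d).deriv]

lemma sq_sub_div_chord_slope (c d : ℝ) {a b : ℝ} (hab : a ≠ b) :
    ((b ^ 2 - c) / d - (a ^ 2 - c) / d) / (b - a) = (a + b) / d := by
  have hba : b - a ≠ 0 := sub_ne_zero.2 hab.symm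
  rw [← sub_div, sub_sub_sub_cancel_right, sq_sub_sq, div_div,
    mul_div_mul_right _ _ hba, add_comm]

noncomputable def pointV (s X Δ : ℝ) (i : ℕ) : ℝ × ℝ :=
  (2 * X + (2 * (i : ℝ) - 1) * Δ, (X + ((i : ℝ) - 1) * Δ) * (X + (i : ℝ) * Δ) / s)

section pointV

variable (s X : ℝ) {Δ : ℝ}

lemma pointV_snd_eq (i : ℕ) :
    (pointV s X Δ i).2 = ((pointV s X Δ i).1 ^ 2 - Δ ^ 2) / (4 * s) := by
  simp only [pointV]
  ring

lemma pointV_fst_add_fst {a b c d : ℕ} (h : a + b = c + d) :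
    (pointV s X Δ a).1 + (pointV s X Δ b).1 = (pointV s X Δ c).1 + (pointV s X Δ d).1 := by
  have h' : (a : ℝ) + b = c + d := by exact_mod_cast h
  simp only [pointV]
  linear_combination 2 * Δ * h'

lemma pointV_fst_injective (hΔ : Δ ≠ 0) : Function.Injective fun i => (pointV s X Δ i).1 := by
  intro a b h
  have h' : ((a : ℝ) - b) * (2 * Δ) = 0 := by
    simp only [pointV] at h
    linear_combination h
  exact_mod_cast sub_eq_zero.1 ((mul_eq_zero.1 h').resolve_right (mul_ne_zero two_ne_zero hΔ))

lemma pointV_chord_slope (hΔ : Δ ≠ 0) {a b : ℕ} (hab : a ≠ b) :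
    ((pointV s X Δ b).2 - (pointV s X Δ a).2) / ((pointV s X Δ b).1 - (pointV s X Δ a).1) =
      ((pointV s X Δ a).1 + (pointV s X Δ b).1) / (4 * s) := by
  rw [pointV_snd_eq, pointV_snd_eq]
  exact sq_sub_div_chord_slope _ _ ((pointV_fst_injective s X hΔ).ne hab)

end pointV

theorem stmt_11_general (s X Δ : ℝ) (hΔ : 0 < Δ) (V : ℕ → ℝ × ℝ)
    (hV : V = fun i : ℕ => (2 * X + (2 * (i : ℝ) - 1) * Δ,
      (X + ((i : ℝ) - 1) * Δ) * (X + (i : ℝ) * Δ) / s)) :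
    ∀ i k : ℕ, 0 < k →
      (((V (i + 2 * k)).2 - (V i).2) / ((V (i + 2 * k)).1 - (V i).1) =
          deriv (fun x : ℝ => (x ^ 2 - Δ ^ 2) / (4 * s)) ((V (i + k)).1)) ∧
      (∀ t : ℕ, t < k →
        ((V (i + 2 * k - t)).2 - (V (i + t)).2) / ((V (i + 2 * k - t)).1 - (V (i + t)).1) =
          ((V (i + 2 * k)).2 - (V i).2) / ((V (i + 2 * k)).1 - (V i).1)) := by
  obtain rfl : V = pointV s X Δ := hV
  intro i k hk
  refine ⟨?_, fun t ht => ?_⟩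
  · rw [pointV_chord_slope s X hΔ.ne' (by omega), deriv_sq_sub_div,
      pointV_fst_add_fst s X (by omega : i + (i + 2 * k) = i + k + (i + k)), two_mul]
  · rw [pointV_chord_slope s X hΔ.ne' (by omega), pointV_chord_slope s X hΔ.ne' (by omega),
      pointV_fst_add_fst s X (by omega : i + t + (i + 2 * k - t) = i + (i + 2 * k))]

/-- With `Vᵢ = (2X+(2i-1)Δ, (X+(i-1)Δ)(X+iΔ)/s)`, if `j - i = 2k > 0` is even
then the segments `VᵢVⱼ`, `Vᵢ₊₁Vⱼ₋₁`, ... are parallel to each other and to the tangent line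
of the parabola `y = (x² - Δ²)/(4s)` at the point `V_{(i+j)/2} = V_{i+k}`. -/
theorem stmt_11 (s X Δ : ℝ) (hs : s ≠ 0) (hΔ : 0 < Δ) (V : ℕ → ℝ × ℝ)
    (hV : V = fun i : ℕ => (2 * X + (2 * (i : ℝ) - 1) * Δ,
      (X + ((i : ℝ) - 1) * Δ) * (X + (i : ℝ) * Δ) / s)) :
    ∀ i k : ℕ, 0 < k →
      (((V (i + 2 * k)).2 - (V i).2) / ((V (i + 2 * k)).1 - (V i).1) =
          deriv (fun x : ℝ => (x ^ 2 - Δ ^ 2) / (4 * s)) ((V (i + k)).1)) ∧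
      (∀ t : ℕ, t < k →
        ((V (i + 2 * k - t)).2 - (V (i + t)).2) / ((V (i + 2 * k - t)).1 - (V (i + t)).1) =
          ((V (i + 2 * k)).2 - (V i).2) / ((V (i + 2 * k)).1 - (V i).1)) :=
  stmt_11_general s X Δ hΔ V hV
end

section
/- With Vᵢ = (2X + (2i−1)Δ, (X+(i−1)Δ)(X+iΔ)/s), the midpoint Mᵢ of VᵢV_{i+1} equals (2(X+iΔ), (X+iΔ)²/s), hence lies on the parabola y = x²/(4s) (with focus S = (0,s)); moreover the slope of VᵢV_{i+1} equals the slope of this parabola at Mᵢ, i.e., side VᵢV_{i+1} is tangent to the parabola y = x²/(4s) at Mᵢ. -/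
/-!
Write `tᵢ = X + iΔ`. Then `Vᵢ = (tᵢ₋₁ + tᵢ, tᵢ₋₁ tᵢ / s)` is the point where the tangents to
`y = x²/(4s)` at the parameters `tᵢ₋₁` and `tᵢ` meet, the parabola point of parameter `t` being
`(2t, t²/s)`. Because `tᵢ₋₁ + tᵢ₊₁ = 2tᵢ`, the midpoint of `VᵢVᵢ₊₁` is the parabola point of
parameter `tᵢ`, and the chord `VᵢVᵢ₊₁` has slope `tᵢ/s`, the slope of the parabola there.
-/

namespace Parabola

section Field

variable {𝕜 : Type*} [Field 𝕜]

def point (s t : 𝕜) : 𝕜 × 𝕜 := (2 * t, t ^ 2 / s)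

/-- The intersection of the tangents to `y = x² / (4s)` at the points of parameters `p` and `q`. -/
def tangentMeet (s p q : 𝕜) : 𝕜 × 𝕜 := (p + q, p * q / s)

theorem point_snd_eq [CharZero 𝕜] (s t : 𝕜) : (point s t).2 = (point s t).1 ^ 2 / (4 * s) := by
  simp only [point]
  ring

theorem midpoint_tangentMeet [CharZero 𝕜] {s p q r : 𝕜} (h : p + r = 2 * q) :
    midpoint 𝕜 (tangentMeet s p q) (tangentMeet s q r) = point s q := by
  have hr : r = 2 * q - p := by linear_combination h
  subst hr
  ext <;> simp only [midpoint_eq_smul_add, tangentMeet, point, Prod.smul_fst, Prod.smul_snd,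
    Prod.fst_add, Prod.snd_add, smul_eq_mul, invOf_eq_inv] <;> ring

theorem chord_slope_tangentMeet {s p q r : 𝕜} (h : p ≠ r) :
    ((tangentMeet s q r).2 - (tangentMeet s p q).2) /
      ((tangentMeet s q r).1 - (tangentMeet s p q).1) = q / s := by
  simp only [tangentMeet]
  rw [show q * r / s - p * q / s = q / s * (r - p) by ring,
    show q + r - (p + q) = r - p by ring, mul_div_cancel_right₀ _ (sub_ne_zero.mpr h.symm)]

end Field

theorem deriv_at_point {𝕜 : Type*} [NontriviallyNormedField 𝕜] [CharZero 𝕜] (s t : 𝕜) :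
    deriv (fun x : 𝕜 => x ^ 2 / (4 * s)) (point s t).1 = t / s := by
  simp only [deriv_div_const, deriv_pow_field, point]
  ring

end Parabola

open Parabola in
theorem stmt_15_general (s X Δ : ℝ) (hΔ : 0 < Δ) (V : ℕ → ℝ × ℝ)
    (hV : V = fun i : ℕ => (2 * X + (2 * (i : ℝ) - 1) * Δ,
      (X + ((i : ℝ) - 1) * Δ) * (X + (i : ℝ) * Δ) / s)) :
    ∀ i : ℕ,
      midpoint ℝ (V i) (V (i + 1)) = (2 * (X + (i : ℝ) * Δ), (X + (i : ℝ) * Δ) ^ 2 / s) ∧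
      (midpoint ℝ (V i) (V (i + 1))).2 = (midpoint ℝ (V i) (V (i + 1))).1 ^ 2 / (4 * s) ∧
      ((V (i + 1)).2 - (V i).2) / ((V (i + 1)).1 - (V i).1) =
        deriv (fun x : ℝ => x ^ 2 / (4 * s)) ((midpoint ℝ (V i) (V (i + 1))).1) := by
  intro i
  have hVt : ∀ j : ℕ, V j = tangentMeet s (X + ((j : ℝ) - 1) * Δ) (X + j * Δ) := fun j => by
    rw [hV, tangentMeet]
    ring
  have hVi' : V (i + 1) = tangentMeet s (X + i * Δ) (X + (i + 1 : ℕ) * Δ) := by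
    rw [hVt, Nat.cast_succ, add_sub_cancel_right]
  have hmid : midpoint ℝ (V i) (V (i + 1)) = point s (X + i * Δ) := by
    rw [hVt i, hVi']
    exact midpoint_tangentMeet (by push_cast; ring)
  refine ⟨hmid, hmid ▸ point_snd_eq s _, ?_⟩
  rw [hmid, deriv_at_point, hVt i, hVi']
  exact chord_slope_tangentMeet (by push_cast; linarith)

/-- With `Vᵢ = (2X+(2i-1)Δ, (X+(i-1)Δ)(X+iΔ)/s)`, the midpoint `Mᵢ` of
`VᵢVᵢ₊₁` equals `(2(X+iΔ), (X+iΔ)²/s)`, lies on the parabola `y = x²/(4s)` (with focus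
`S = (0,s)`), and the slope of `VᵢVᵢ₊₁` equals the slope of that parabola at `Mᵢ`;
i.e. the side `VᵢVᵢ₊₁` is tangent to `y = x²/(4s)` at `Mᵢ`. -/
theorem stmt_15 (s X Δ : ℝ) (hs : s ≠ 0) (hΔ : 0 < Δ) (V : ℕ → ℝ × ℝ)
    (hV : V = fun i : ℕ => (2 * X + (2 * (i : ℝ) - 1) * Δ,
      (X + ((i : ℝ) - 1) * Δ) * (X + (i : ℝ) * Δ) / s)) :
    ∀ i : ℕ,
      midpoint ℝ (V i) (V (i + 1)) = (2 * (X + (i : ℝ) * Δ), (X + (i : ℝ) * Δ) ^ 2 / s) ∧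
      (midpoint ℝ (V i) (V (i + 1))).2 = (midpoint ℝ (V i) (V (i + 1))).1 ^ 2 / (4 * s) ∧
      ((V (i + 1)).2 - (V i).2) / ((V (i + 1)).1 - (V i).1) =
        deriv (fun x : ℝ => x ^ 2 / (4 * s)) ((midpoint ℝ (V i) (V (i + 1))).1) :=
  stmt_15_general s X Δ hΔ V hV
end

section
/- Let Mᵢ be the midpoint of side VᵢV_{i+1} of an equidistant Simson polygon, and pᵢ the vertical line through Mᵢ (orthogonal to the Simson line L = x-axis). Then the reflection of pᵢ in the line VᵢV_{i+1} passes through the Simson point S = (0, s). -/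
/-! The reflection of `S = (0, s)` in the side line `y = (a/s) x - a²/s` is `(2a, -s)`: the two
defining conditions form a linear system in `R` with determinant `a² + s² > 0`. -/

theorem mul_add_eq_of_midpoint_mem_line {a s : ℝ} (hs : s ≠ 0) {R : ℝ × ℝ}
    (hmid : (s + R.2) / 2 = (a / s) * ((0 + R.1) / 2) - a ^ 2 / s) :
    s * (s + R.2) = a * R.1 - 2 * a ^ 2 := by
  field_simp at hmid
  linear_combination hmid

theorem reflection_eq_of_midpoint_mem_line_of_perp {a s : ℝ} (hs : s ≠ 0) {R : ℝ × ℝ}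
    (hmid : (s + R.2) / 2 = (a / s) * ((0 + R.1) / 2) - a ^ 2 / s)
    (hperp : (0 - R.1) * s + (s - R.2) * a = 0) :
    R = (2 * a, -s) := by
  have hline := mul_add_eq_of_midpoint_mem_line hs hmid
  have hdet : a ^ 2 + s ^ 2 ≠ 0 := by positivity
  ext
  · exact mul_right_cancel₀ hdet (by linear_combination (-a) * hline - s * hperp)
  · exact mul_right_cancel₀ hdet (by linear_combination s * hline - a * hperp)

theorem stmt_16_general (s X Δ : ℝ) (hs : s ≠ 0) (i : ℕ) (R : ℝ × ℝ)
    -- the midpoint of `S = (0,s)` and `R` lies on the line `y = ((X+iΔ)/s) x - (X+iΔ)²/s`: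
    (hmid : (s + R.2) / 2 = ((X + (i : ℝ) * Δ) / s) * ((0 + R.1) / 2)
        - (X + (i : ℝ) * Δ) ^ 2 / s)
    -- `S - R` is orthogonal to the direction `(s, X+iΔ)` of that line:
    (hperp : (0 - R.1) * s + (s - R.2) * (X + (i : ℝ) * Δ) = 0) :
    R.1 = 2 * (X + (i : ℝ) * Δ) := by
  rw [reflection_eq_of_midpoint_mem_line_of_perp hs hmid hperp]

/-- Let `Mᵢ = (2(X+iΔ), (X+iΔ)²/s)` be the midpoint of the side `VᵢVᵢ₊₁` of an
equidistant Simson polygon, whose side line is `y = ((X+iΔ)/s) x - (X+iΔ)²/s`, and let `pᵢ`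
be the vertical line `x = 2(X+iΔ)` through `Mᵢ` (orthogonal to the Simson line, the x-axis).
Then the reflection of `pᵢ` in the side line passes through the Simson point `S = (0,s)`:
equivalently, the reflection `R` of `S` across the side line lies on `pᵢ`. -/
theorem stmt_16 (s X Δ : ℝ) (hs : s ≠ 0) (hΔ : 0 < Δ) (i : ℕ) (R : ℝ × ℝ)
    -- the midpoint of `S = (0,s)` and `R` lies on the line `y = ((X+iΔ)/s) x - (X+iΔ)²/s`:
    (hmid : (s + R.2) / 2 = ((X + (i : ℝ) * Δ) / s) * ((0 + R.1) / 2)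
        - (X + (i : ℝ) * Δ) ^ 2 / s)
    -- `S - R` is orthogonal to the direction `(s, X+iΔ)` of that line:
    (hperp : (0 - R.1) * s + (s - R.2) * (X + (i : ℝ) * Δ) = 0) :
    R.1 = 2 * (X + (i : ℝ) * Δ) :=
  stmt_16_general s X Δ hs i R hmid hperp
end

section
/- (Lambert's Theorem) Let three tangent lines to the parabola y = x²/(4s) (s ≠ 0), at points with distinct x-coordinates a, b, c, pairwise intersect to form a triangle. Then the focus F = (0, s) lies on the circumcircle of this triangle. -/
/-!
The tangents at `u ≠ v` meet at `((u + v) / 2, u v / (4 s))`, so the three vertices have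
coordinates polynomial in `a, b, c` (up to powers of `s`). The circle centred at
`((a + b + c) / 4 - a b c / (16 s²), s / 2 + (a b + b c + c a) / (8 s))` through the focus
`(0, s)` then passes through all three vertices, which is a polynomial identity.
-/

open EuclideanGeometry

lemma tangent_inter_coords {s u v x y : ℝ} (hs : s ≠ 0) (huv : u ≠ v)
    (hu : y = (u / (2 * s)) * x - u ^ 2 / (4 * s))
    (hv : y = (v / (2 * s)) * x - v ^ 2 / (4 * s)) :
    x = (u + v) / 2 ∧ y = u * v / (4 * s) := by
  have hx : x = (u + v) / 2 := by
    have h : (u - v) * (2 * x - (u + v)) = 0 := by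
      field_simp at hu hv
      linear_combination (hv - hu) / 2
    rcases mul_eq_zero.mp h with h | h
    · exact absurd (sub_eq_zero.mp h) huv
    · linarith
  refine ⟨hx, ?_⟩
  rw [hu, hx]
  field_simp
  ring

lemma EuclideanSpace.dist_sq_fin_two (p q : EuclideanSpace ℝ (Fin 2)) :
    dist p q ^ 2 = (p 0 - q 0) ^ 2 + (p 1 - q 1) ^ 2 := by
  rw [EuclideanSpace.dist_eq, Real.sq_sqrt (by positivity), Fin.sum_univ_two,
    Real.dist_eq, Real.dist_eq, sq_abs, sq_abs]

/-- Lambert's Theorem: Let `P`, `Q`, `R` be the pairwise intersection points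
of the tangent lines to the parabola `y = x²/(4s)` (`s ≠ 0`) at parameters `a`, `b`, `c`
(pairwise distinct), where the tangent at parameter `a` is `y = (a/(2s)) x - a²/(4s)`.
Then the focus `F = (0, s)` lies on the circumcircle of the triangle `PQR`, i.e. the four
points `P`, `Q`, `R`, `F` are concyclic. -/
theorem stmt_19 (s a b c : ℝ) (hs : s ≠ 0)
    (hab : a ≠ b) (hac : a ≠ c) (hbc : b ≠ c)
    (P Q R F : EuclideanSpace ℝ (Fin 2))
    -- `P` is the intersection of the tangents at `a` and `b`:
    (hPa : P 1 = (a / (2 * s)) * P 0 - a ^ 2 / (4 * s))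
    (hPb : P 1 = (b / (2 * s)) * P 0 - b ^ 2 / (4 * s))
    -- `Q` is the intersection of the tangents at `b` and `c`:
    (hQb : Q 1 = (b / (2 * s)) * Q 0 - b ^ 2 / (4 * s))
    (hQc : Q 1 = (c / (2 * s)) * Q 0 - c ^ 2 / (4 * s))
    -- `R` is the intersection of the tangents at `a` and `c`:
    (hRa : R 1 = (a / (2 * s)) * R 0 - a ^ 2 / (4 * s))
    (hRc : R 1 = (c / (2 * s)) * R 0 - c ^ 2 / (4 * s))
    -- `F` is the focus `(0, s)`:
    (hF0 : F 0 = 0) (hF1 : F 1 = s) :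
    Cospherical ({P, Q, R, F} : Set (EuclideanSpace ℝ (Fin 2))) := by
  obtain ⟨hP0, hP1⟩ := tangent_inter_coords hs hab hPa hPb
  obtain ⟨hQ0, hQ1⟩ := tangent_inter_coords hs hbc hQb hQc
  obtain ⟨hR0, hR1⟩ := tangent_inter_coords hs hac hRa hRc
  let O : EuclideanSpace ℝ (Fin 2) :=
    !₂[(a + b + c) / 4 - a * b * c / (16 * s ^ 2), s / 2 + (a * b + b * c + c * a) / (8 * s)]
  suffices h : ∀ X ∈ ({P, Q, R, F} : Set (EuclideanSpace ℝ (Fin 2))),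
      dist X O ^ 2 = dist F O ^ 2 from
    ⟨O, dist F O, fun X hX => (pow_left_inj₀ dist_nonneg dist_nonneg two_ne_zero).mp (h X hX)⟩
  rintro X (rfl | rfl | rfl | rfl) <;>
    simp only [EuclideanSpace.dist_sq_fin_two, O, hP0, hP1, hQ0, hQ1, hR0, hR1, hF0, hF1] <;>
    simp only [Matrix.cons_val_zero, Matrix.cons_val_one] <;> field_simp <;> ring
end
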